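/- arXiv:1502.04327 — 5 statements merged into one kernel-verified Lean document; each statement's English description precedes it below -/
import Mathlib

section
/- Every finite-dimensional representation M of a quiver Q possesses a unique filtration M = M^r ⊇ ... ⊇ M^1 ⊇ M^0 = 0 such that every subquotient M^ν/M^{ν−1} is θ-semi-stable and μ(M^1/M^0) > μ(M^2/M^1) > ... > μ(M^r/M^{r−1}) (the Harder–Narasimhan filtration). -/
open Module

/-- Subrepresentation condition for a family of subspaces. -/
def IsSubrep {V A : Type} (s t : A → V) {d : V → ℕ}
    (M : ∀ a : A, (Fin (d (s a)) → ℂ) →ₗ[ℂ] (Fin (d (t a)) → ℂ))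
    (U : ∀ i, Submodule ℂ (Fin (d i) → ℂ)) : Prop :=
  ∀ a : A, (U (s a)).map (M a) ≤ U (t a)

/-- Slope `μ_θ` of the subquotient `U/W` of a representation:
`θ` evaluated on the dimension vector of `U/W` divided by its total dimension. -/
noncomputable def slopeQuot {V : Type} [Fintype V] (θ : V → ℤ) {d : V → ℕ}
    (U W : ∀ i, Submodule ℂ (Fin (d i) → ℂ)) : ℚ :=
  (∑ i, (θ i : ℚ) * ((finrank ℂ (U i) : ℚ) - (finrank ℂ (W i) : ℚ))) /
    (∑ i, ((finrank ℂ (U i) : ℚ) - (finrank ℂ (W i) : ℚ)))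

/-- The subquotient `U/W` (for subrepresentations `W ≤ U` of `M`) is a nonzero
`θ`-semi-stable representation: `W ≠ U` and every nonzero subrepresentation of
`U/W`, i.e. every intermediate subrepresentation `W ≤ Z ≤ U` with `Z ≠ W`, has
slope at most `μ_θ(U/W)`. -/
def IsSemistableQuot {V A : Type} [Fintype V] (s t : A → V) (θ : V → ℤ)
    {d : V → ℕ} (M : ∀ a : A, (Fin (d (s a)) → ℂ) →ₗ[ℂ] (Fin (d (t a)) → ℂ))
    (U W : ∀ i, Submodule ℂ (Fin (d i) → ℂ)) : Prop :=
  IsSubrep s t M U ∧ IsSubrep s t M W ∧ (∀ i, W i ≤ U i) ∧ W ≠ U ∧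
    ∀ Z : ∀ i, Submodule ℂ (Fin (d i) → ℂ), IsSubrep s t M Z →
      (∀ i, W i ≤ Z i) → (∀ i, Z i ≤ U i) → Z ≠ W →
      slopeQuot θ Z W ≤ slopeQuot θ U W

/-- `U : Fin (r+1) → _` is a Harder–Narasimhan filtration of `M`:
`0 = U^0 ⊆ U^1 ⊆ ... ⊆ U^r = M` by subrepresentations, all subquotients
`U^ν/U^{ν−1}` are `θ`-semi-stable (in particular nonzero) and their slopes are
strictly decreasing. -/
def IsHNFiltration {V A : Type} [Fintype V] (s t : A → V) (θ : V → ℤ)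
    {d : V → ℕ} (M : ∀ a : A, (Fin (d (s a)) → ℂ) →ₗ[ℂ] (Fin (d (t a)) → ℂ))
    (r : ℕ) (U : Fin (r + 1) → ∀ i, Submodule ℂ (Fin (d i) → ℂ)) : Prop :=
  U 0 = (fun _ => ⊥) ∧ U (Fin.last r) = (fun _ => ⊤) ∧
  (∀ ν, IsSubrep s t M (U ν)) ∧
  (∀ ν : Fin r, IsSemistableQuot s t θ M (U ν.succ) (U ν.castSucc)) ∧
  StrictAnti (fun ν : Fin r => slopeQuot θ (U ν.succ) (U ν.castSucc))



section
variable {V A : Type} (s t : A → V) {d : V → ℕ}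
    (M : ∀ a : A, (Fin (d (s a)) → ℂ) →ₗ[ℂ] (Fin (d (t a)) → ℂ))

lemma isSubrep_bot : IsSubrep s t M (fun _ => ⊥) := by
  intro a; simp
lemma isSubrep_top : IsSubrep s t M (fun _ => ⊤) := by
  intro a; exact le_top
lemma IsSubrep.sup {U W : ∀ i, Submodule ℂ (Fin (d i) → ℂ)}
    (hU : IsSubrep s t M U) (hW : IsSubrep s t M W) : IsSubrep s t M (U ⊔ W) := by
  intro a
  rw [show (U ⊔ W) (s a) = U (s a) ⊔ W (s a) from rfl, Submodule.map_sup]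
  exact sup_le_sup (hU a) (hW a)
lemma IsSubrep.inf {U W : ∀ i, Submodule ℂ (Fin (d i) → ℂ)}
    (hU : IsSubrep s t M U) (hW : IsSubrep s t M W) : IsSubrep s t M (U ⊓ W) := by
  intro a
  rw [show (U ⊓ W) (s a) = U (s a) ⊓ W (s a) from rfl]
  exact le_trans (Submodule.map_inf_le _) (inf_le_inf (hU a) (hW a))

lemma finrank_le_d (i : V) (p : Submodule ℂ (Fin (d i) → ℂ)) : finrank ℂ p ≤ d i := by
  have := Submodule.finrank_le p
  rwa [finrank_fin_fun] at this
end

section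
variable {V : Type} [Fintype V] (θ : V → ℤ) {d : V → ℕ}


noncomputable def numQ (θ : V → ℤ) (U W : ∀ i, Submodule ℂ (Fin (d i) → ℂ)) : ℚ :=
  ∑ i, (θ i : ℚ) * ((finrank ℂ (U i) : ℚ) - (finrank ℂ (W i) : ℚ))

noncomputable def denQ (U W : ∀ i, Submodule ℂ (Fin (d i) → ℂ)) : ℚ :=
  ∑ i, ((finrank ℂ (U i) : ℚ) - (finrank ℂ (W i) : ℚ))

lemma slopeQuot_def (U W : ∀ i, Submodule ℂ (Fin (d i) → ℂ)) :
    slopeQuot θ U W = numQ θ U W / denQ U W := rfl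

lemma numQ_add (W X Y : ∀ i, Submodule ℂ (Fin (d i) → ℂ)) :
    numQ θ Y W = numQ θ Y X + numQ θ X W := by
  unfold numQ; rw [← Finset.sum_add_distrib]; congr 1; ext i; ring

lemma denQ_add (W X Y : ∀ i, Submodule ℂ (Fin (d i) → ℂ)) :
    denQ Y W = denQ Y X + denQ X W := by
  unfold denQ; rw [← Finset.sum_add_distrib]; congr 1; ext i; ring

lemma denQ_pos {U W : ∀ i, Submodule ℂ (Fin (d i) → ℂ)} (h : W ≤ U) (hne : W ≠ U) :
    0 < denQ U W := by
  have hle : ∀ i, finrank ℂ (W i) ≤ finrank ℂ (U i) :=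
    fun i => Submodule.finrank_mono (h i)
  obtain ⟨i0, hi0⟩ : ∃ i, W i ≠ U i := by
    by_contra hc; push_neg at hc; exact hne (funext hc)
  have hlt : finrank ℂ (W i0) < finrank ℂ (U i0) :=
    Submodule.finrank_lt_finrank_of_lt (lt_of_le_of_ne (h i0) hi0)
  unfold denQ
  have : ∀ i ∈ Finset.univ, (0:ℚ) ≤ (finrank ℂ (U i) : ℚ) - (finrank ℂ (W i) : ℚ) := by
    intro i _
    have h2 : (finrank ℂ (W i) : ℚ) ≤ (finrank ℂ (U i) : ℚ) := by exact_mod_cast hle i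
    linarith
  calc (0:ℚ) < (finrank ℂ (U i0) : ℚ) - (finrank ℂ (W i0) : ℚ) := by
        have : (finrank ℂ (W i0) : ℚ) < (finrank ℂ (U i0) : ℚ) := by exact_mod_cast hlt
        linarith
    _ ≤ _ := Finset.single_le_sum this (Finset.mem_univ i0)

lemma denQ_nonneg {U W : ∀ i, Submodule ℂ (Fin (d i) → ℂ)} (h : W ≤ U) :
    0 ≤ denQ U W := by
  apply Finset.sum_nonneg
  intro i _
  have h2 : (finrank ℂ (W i) : ℚ) ≤ (finrank ℂ (U i) : ℚ) := by
    exact_mod_cast Submodule.finrank_mono (h i)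
  linarith

lemma eq_of_le_of_denQ_le {U W : ∀ i, Submodule ℂ (Fin (d i) → ℂ)} (h : W ≤ U)
    (hd : denQ U W ≤ 0) : W = U := by
  by_contra hne; exact absurd hd (not_le.mpr (denQ_pos h hne))

-- seesaw
lemma slopeQuot_combo {W X Y : ∀ i, Submodule ℂ (Fin (d i) → ℂ)}
    (h1 : W ≤ X) (h2 : X ≤ Y) (n1 : W ≠ X) (n2 : X ≠ Y) :
    slopeQuot θ Y W =
      (slopeQuot θ X W * denQ X W + slopeQuot θ Y X * denQ Y X)
        / (denQ X W + denQ Y X) := by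
  have p1 : 0 < denQ X W := denQ_pos h1 n1
  have p2 : 0 < denQ Y X := denQ_pos h2 n2
  rw [slopeQuot_def, slopeQuot_def, slopeQuot_def,
    div_mul_cancel₀ _ (ne_of_gt p1), div_mul_cancel₀ _ (ne_of_gt p2),
    numQ_add θ W X Y, denQ_add W X Y]
  ring_nf

-- pure rationals
lemma combo_le {a b c m n : ℚ} (hm : 0 < m) (hn : 0 < n) (ha : a ≤ c) (hb : b ≤ c) :
    (a * m + b * n) / (m + n) ≤ c := by
  rw [div_le_iff₀ (by linarith)]; nlinarith

lemma combo_lt {a b c m n : ℚ} (hm : 0 < m) (hn : 0 < n) (ha : a ≤ c) (hb : b < c) :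
    (a * m + b * n) / (m + n) < c := by
  rw [div_lt_iff₀ (by linarith)]; nlinarith

lemma le_of_combo_le {a b m n : ℚ} (hm : 0 < m) (hn : 0 < n)
    (h : (a * m + b * n) / (m + n) ≤ a) : b ≤ a := by
  rw [div_le_iff₀ (by linarith)] at h; nlinarith

lemma combo_self {a m n : ℚ} (hm : 0 < m) (hn : 0 < n) :
    (a * m + a * n) / (m + n) = a := by
  field_simp

-- second isomorphism
lemma finrank_modular (i : V) (p q : Submodule ℂ (Fin (d i) → ℂ)) :
    (finrank ℂ (p ⊔ q : Submodule ℂ (Fin (d i) → ℂ)) : ℚ) - (finrank ℂ q : ℚ)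
      = (finrank ℂ p : ℚ) - (finrank ℂ (p ⊓ q : Submodule ℂ (Fin (d i) → ℂ)) : ℚ) := by
  have := Submodule.finrank_sup_add_finrank_inf_eq p q
  have : ((finrank ℂ (p ⊔ q : Submodule ℂ (Fin (d i) → ℂ)) : ℚ)
      + (finrank ℂ (p ⊓ q : Submodule ℂ (Fin (d i) → ℂ)) : ℚ))
      = (finrank ℂ p : ℚ) + (finrank ℂ q : ℚ) := by exact_mod_cast this
  linarith

lemma slopeQuot_sup_inf (Y P : ∀ i, Submodule ℂ (Fin (d i) → ℂ)) :
    slopeQuot θ (Y ⊔ P) P = slopeQuot θ Y (Y ⊓ P) := by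
  have hnum : numQ θ (Y ⊔ P) P = numQ θ Y (Y ⊓ P) := by
    unfold numQ; congr 1; ext i
    rw [show (Y ⊔ P) i = Y i ⊔ P i from rfl, show (Y ⊓ P) i = Y i ⊓ P i from rfl,
      finrank_modular i (Y i) (P i)]
  have hden : denQ (Y ⊔ P) P = denQ Y (Y ⊓ P) := by
    unfold denQ; congr 1; ext i
    rw [show (Y ⊔ P) i = Y i ⊔ P i from rfl, show (Y ⊓ P) i = Y i ⊓ P i from rfl,
      finrank_modular i (Y i) (P i)]
  rw [slopeQuot_def, slopeQuot_def, hnum, hden]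

lemma denQ_sup_inf (Y P : ∀ i, Submodule ℂ (Fin (d i) → ℂ)) :
    denQ (Y ⊔ P) P = denQ Y (Y ⊓ P) := by
  unfold denQ; congr 1; ext i
  rw [show (Y ⊔ P) i = Y i ⊔ P i from rfl, show (Y ⊓ P) i = Y i ⊓ P i from rfl,
    finrank_modular i (Y i) (P i)]

end

section
variable {V A : Type} [Fintype V] {s t : A → V} {θ : V → ℤ} {d : V → ℕ}
    {M : ∀ a : A, (Fin (d (s a)) → ℂ) →ₗ[ℂ] (Fin (d (t a)) → ℂ)}

lemma slope_mem_range (W Y : ∀ i, Submodule ℂ (Fin (d i) → ℂ)) :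
    slopeQuot θ Y W ∈ Set.range (fun a : (∀ i : V, Fin (d i + 1)) =>
      (∑ i, (θ i : ℚ) * ((a i : ℚ) - (finrank ℂ (W i) : ℚ))) /
        (∑ i, ((a i : ℚ) - (finrank ℂ (W i) : ℚ)))) := by
  refine ⟨fun i => ⟨finrank ℂ (Y i), Nat.lt_succ_of_le (finrank_le_d i (Y i))⟩, ?_⟩
  simp only [slopeQuot]

lemma exists_maxdest (W T : ∀ i, Submodule ℂ (Fin (d i) → ℂ))
    (hW : IsSubrep s t M W) (hT : IsSubrep s t M T) (hle : W ≤ T) (hne : W ≠ T) :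
    ∃ Z, IsSubrep s t M Z ∧ W ≤ Z ∧ Z ≤ T ∧ Z ≠ W ∧
      (∀ Y, IsSubrep s t M Y → W ≤ Y → Y ≤ T → Y ≠ W →
        slopeQuot θ Y W ≤ slopeQuot θ Z W) ∧
      (∀ Y, IsSubrep s t M Y → W ≤ Y → Y ≤ T → Y ≠ W →
        slopeQuot θ Y W = slopeQuot θ Z W → denQ Y W ≤ denQ Z W) := by
  classical
  set S : Set ℚ := {q | ∃ Y, IsSubrep s t M Y ∧ W ≤ Y ∧ Y ≤ T ∧ Y ≠ W ∧
    slopeQuot θ Y W = q} with hS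
  have hSfin : S.Finite := by
    apply Set.Finite.subset (Set.finite_range (fun a : (∀ i : V, Fin (d i + 1)) =>
      (∑ i, (θ i : ℚ) * ((a i : ℚ) - (finrank ℂ (W i) : ℚ))) /
        (∑ i, ((a i : ℚ) - (finrank ℂ (W i) : ℚ)))))
    rintro q ⟨Y, _, _, _, _, rfl⟩
    exact slope_mem_range W Y
  have hSne : S.Nonempty := ⟨_, T, hT, hle, le_rfl, (Ne.symm hne), rfl⟩
  obtain ⟨μ, hμS, hμmax⟩ := Set.Finite.exists_maximalFor id S hSfin hSne
  have hμub : ∀ q ∈ S, q ≤ μ := by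
    intro q hq
    by_contra hlt
    push_neg at hlt
    exact absurd (hμmax hq (le_of_lt hlt)) (not_le.mpr hlt)
  -- now maximize denQ among slope-μ subreps
  set D : Set ℚ := {n | ∃ Y, IsSubrep s t M Y ∧ W ≤ Y ∧ Y ≤ T ∧ Y ≠ W ∧
    slopeQuot θ Y W = μ ∧ denQ Y W = n} with hD
  have hDfin : D.Finite := by
    apply Set.Finite.subset (Set.finite_range (fun a : (∀ i : V, Fin (d i + 1)) =>
      (∑ i, ((a i : ℚ) - (finrank ℂ (W i) : ℚ)))))
    rintro q ⟨Y, _, _, _, _, _, rfl⟩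
    exact ⟨fun i => ⟨finrank ℂ (Y i), Nat.lt_succ_of_le (finrank_le_d i (Y i))⟩, rfl⟩
  have hDne : D.Nonempty := by
    obtain ⟨Y, h1, h2, h3, h4, h5⟩ := hμS
    exact ⟨_, Y, h1, h2, h3, h4, h5, rfl⟩
  obtain ⟨n, hnD, hnmax⟩ := Set.Finite.exists_maximalFor id D hDfin hDne
  obtain ⟨Z, h1, h2, h3, h4, h5, h6⟩ := hnD
  refine ⟨Z, h1, h2, h3, h4, ?_, ?_⟩
  · intro Y hY hWY hYT hYW
    rw [h5]
    exact hμub _ ⟨Y, hY, hWY, hYT, hYW, rfl⟩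
  · intro Y hY hWY hYT hYW heq
    rw [h5] at heq
    by_contra hlt
    push_neg at hlt
    have h7 : n ≤ denQ Y W := h6 ▸ le_of_lt hlt
    have h8 : n = denQ Y W := le_antisymm h7 (hnmax ⟨Y, hY, hWY, hYT, hYW, heq, rfl⟩ h7)
    have h9 : denQ Y W = denQ Z W := by rw [h6, h8]
    rw [h9] at hlt
    exact lt_irrefl _ hlt

end


def RelHN {V A : Type} [Fintype V] (s t : A → V) (θ : V → ℤ)
    {d : V → ℕ} (M : ∀ a : A, (Fin (d (s a)) → ℂ) →ₗ[ℂ] (Fin (d (t a)) → ℂ))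
    (r : ℕ) (U : Fin (r + 1) → ∀ i, Submodule ℂ (Fin (d i) → ℂ))
    (W T : ∀ i, Submodule ℂ (Fin (d i) → ℂ)) : Prop :=
  U 0 = W ∧ U (Fin.last r) = T ∧
  (∀ ν, IsSubrep s t M (U ν)) ∧
  (∀ ν : Fin r, IsSemistableQuot s t θ M (U ν.succ) (U ν.castSucc)) ∧
  StrictAnti (fun ν : Fin r => slopeQuot θ (U ν.succ) (U ν.castSucc))

section
variable {V A : Type} [Fintype V] {s t : A → V} {θ : V → ℤ} {d : V → ℕ}
    {M : ∀ a : A, (Fin (d (s a)) → ℂ) →ₗ[ℂ] (Fin (d (t a)) → ℂ)}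

noncomputable def dimN (U : ∀ i, Submodule ℂ (Fin (d i) → ℂ)) : ℕ :=
  ∑ i, finrank ℂ (U i)

omit [Fintype V] in
lemma denQ_eq_dim [Fintype V] (U W : ∀ i, Submodule ℂ (Fin (d i) → ℂ)) :
    denQ U W = (dimN U : ℚ) - (dimN W : ℚ) := by
  unfold denQ dimN
  push_cast
  rw [Finset.sum_sub_distrib]

lemma dimN_lt {U W : ∀ i, Submodule ℂ (Fin (d i) → ℂ)} (h : W ≤ U) (hne : W ≠ U) :
    dimN W < dimN U := by
  have := denQ_pos h hne
  rw [denQ_eq_dim] at this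
  exact_mod_cast sub_pos.mp this

lemma dimN_le {U W : ∀ i, Submodule ℂ (Fin (d i) → ℂ)} (h : W ≤ U) :
    dimN W ≤ dimN U := by
  exact Finset.sum_le_sum fun i _ => Submodule.finrank_mono (h i)

lemma relHN_monotone {r : ℕ} {U : Fin (r+1) → ∀ i, Submodule ℂ (Fin (d i) → ℂ)}
    {W T} (h : RelHN s t θ M r U W T) : Monotone U := by
  rw [Fin.monotone_iff_le_succ]
  intro i
  exact (h.2.2.2.1 i).2.2.1

theorem exists_relHN (T : ∀ i, Submodule ℂ (Fin (d i) → ℂ)) (hT : IsSubrep s t M T) :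
    ∀ (k : ℕ) (W : ∀ i, Submodule ℂ (Fin (d i) → ℂ)), IsSubrep s t M W → W ≤ T →
    dimN T - dimN W ≤ k → ∃ r U, RelHN s t θ M r U W T := by
  intro k
  induction k using Nat.strong_induction_on with
  | _ k IH =>
  intro W hW hle hk
  by_cases hWT : W = T
  · refine ⟨0, fun _ => W, rfl, by rw [hWT], fun _ => hW, fun ν => ν.elim0, fun a => a.elim0⟩
  · obtain ⟨Z, hZ, hWZ, hZT, hZW, hmax, hdmax⟩ := exists_maxdest W T hW hT hle hWT
    -- property P2
    have P2 : ∀ Y, IsSubrep s t M Y → Z ≤ Y → Y ≤ T → Y ≠ Z →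
        slopeQuot θ Y Z < slopeQuot θ Z W := by
      intro Y hY hZY hYT hYZ
      have hWY : W ≤ Y := le_trans hWZ hZY
      have hYW : Y ≠ W := fun hc => hZW (le_antisymm (hc ▸ hZY) hWZ)
      have hs : slopeQuot θ Y W ≤ slopeQuot θ Z W := hmax Y hY hWY hYT hYW
      have hcombo := slopeQuot_combo θ (W := W) (X := Z) (Y := Y) hWZ hZY
        (Ne.symm hZW) (Ne.symm hYZ)
      have pm : 0 < denQ Z W := denQ_pos hWZ (Ne.symm hZW)
      have pn : 0 < denQ Y Z := denQ_pos hZY (Ne.symm hYZ)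
      rcases lt_or_ge (slopeQuot θ Y Z) (slopeQuot θ Z W) with hlt | hge
      · exact hlt
      · exfalso
        have hbe : slopeQuot θ Y Z = slopeQuot θ Z W := by
          have : slopeQuot θ Y Z ≤ slopeQuot θ Z W := by
            apply le_of_combo_le pm pn
            rw [← hcombo]; exact hs
          exact le_antisymm this hge
        have hseq : slopeQuot θ Y W = slopeQuot θ Z W := by
          rw [hcombo, hbe, combo_self pm pn]
        have hd := hdmax Y hY hWY hYT hYW hseq
        have : denQ Z W < denQ Y W := by
          rw [denQ_add (W := W) (X := Z) (Y := Y)]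
          linarith
        linarith
    -- recurse on Z ≤ T
    have hZle : Z ≤ T := hZT
    have hdZ : dimN W < dimN Z := dimN_lt hWZ (Ne.symm hZW)
    have hdT : dimN Z ≤ dimN T := dimN_le hZle
    have hdWT : dimN W < dimN T := dimN_lt hle hWT
    obtain ⟨r, Ut, hUt⟩ := IH (dimN T - dimN Z) (by omega) Z hZ hZle le_rfl
    clear IH
    -- prepend W
    refine ⟨r + 1, Fin.cons W Ut, ?_, ?_, ?_, ?_, ?_⟩
    · exact Fin.cons_zero _ _
    · rw [← Fin.succ_last, Fin.cons_succ]; exact hUt.2.1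
    · intro ν
      induction ν using Fin.cases with
      | zero => rw [Fin.cons_zero]; exact hW
      | succ κ => rw [Fin.cons_succ]; exact hUt.2.2.1 κ
    · intro ν
      induction ν using Fin.cases with
      | zero =>
        have e1 : (Fin.cons W Ut : Fin (r+2) → ∀ i, Submodule ℂ (Fin (d i) → ℂ))
            (0 : Fin (r+1)).succ = Z := by rw [Fin.cons_succ]; exact hUt.1
        have e2 : (Fin.cons W Ut : Fin (r+2) → ∀ i, Submodule ℂ (Fin (d i) → ℂ))
            (0 : Fin (r+1)).castSucc = W := by rw [Fin.castSucc_zero, Fin.cons_zero]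
        rw [e1, e2]
        exact ⟨hZ, hW, hWZ, Ne.symm hZW, fun Y hY h1 h2 h3 => hmax Y hY h1 (le_trans h2 hZle) h3⟩
      | succ κ =>
        have e1 : (Fin.cons W Ut : Fin (r+2) → ∀ i, Submodule ℂ (Fin (d i) → ℂ))
            (κ.succ).succ = Ut κ.succ := Fin.cons_succ _ _ _
        have e2 : (Fin.cons W Ut : Fin (r+2) → ∀ i, Submodule ℂ (Fin (d i) → ℂ))
            (κ.succ).castSucc = Ut κ.castSucc := by
          rw [← Fin.succ_castSucc, Fin.cons_succ]
        rw [e1, e2]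
        exact hUt.2.2.2.1 κ
    · -- strict anti
      have key : ∀ κ : Fin (r+1),
          (Fin.cons W Ut : Fin (r+2) → ∀ i, Submodule ℂ (Fin (d i) → ℂ)) κ.succ
            = Ut κ := fun κ => Fin.cons_succ _ _ _
      have hg : ∀ i : Fin r,
          slopeQuot θ ((Fin.cons W Ut : Fin (r+2) → _) (i.succ).succ)
              ((Fin.cons W Ut : Fin (r+2) → _) (i.succ).castSucc)
            = slopeQuot θ (Ut i.succ) (Ut i.castSucc) := by
        intro i
        rw [key, ← Fin.succ_castSucc, key]
      have hg0 : slopeQuot θ ((Fin.cons W Ut : Fin (r+2) → _) (0 : Fin (r+1)).succ)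
          ((Fin.cons W Ut : Fin (r+2) → _) (0 : Fin (r+1)).castSucc)
            = slopeQuot θ Z W := by
        rw [key, Fin.castSucc_zero, Fin.cons_zero, hUt.1]
      -- every tail slope is < slopeQuot θ Z W
      have htail_lt : ∀ κ : Fin r, slopeQuot θ (Ut κ.succ) (Ut κ.castSucc) < slopeQuot θ Z W := by
        intro κ
        have hpos : 0 < r := κ.pos
        set κ0 : Fin r := ⟨0, hpos⟩ with hκ0
        have hmono := relHN_monotone hUt
        have step0 := hUt.2.2.2.1 κ0
        have hcs0 : κ0.castSucc = (0 : Fin (r+1)) := Fin.ext (by simp [hκ0])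
        have hUtcs0 : Ut κ0.castSucc = Z := by rw [hcs0, hUt.1]
        have hY : IsSubrep s t M (Ut κ0.succ) := hUt.2.2.1 _
        have hZY : Z ≤ Ut κ0.succ := by
          rw [← hUtcs0]; exact step0.2.2.1
        have hYT : Ut κ0.succ ≤ T := by rw [← hUt.2.1]; exact hmono (Fin.le_last _)
        have hYZ : Ut κ0.succ ≠ Z := by
          rw [← hUtcs0]; exact (Ne.symm step0.2.2.2.1)
        have h0lt : slopeQuot θ (Ut κ0.succ) (Ut κ0.castSucc) < slopeQuot θ Z W := by
          rw [hUtcs0]; exact P2 _ hY hZY hYT hYZ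
        have hle0 : slopeQuot θ (Ut κ.succ) (Ut κ.castSucc) ≤
            slopeQuot θ (Ut κ0.succ) (Ut κ0.castSucc) :=
          hUt.2.2.2.2.antitone (by simp [hκ0, Fin.le_def])
        exact lt_of_le_of_lt hle0 h0lt
      intro a b hab
      simp only
      have hbne : b ≠ 0 := Fin.pos_iff_ne_zero.mp (lt_of_le_of_lt (Fin.zero_le a) hab)
      obtain ⟨c, rfl⟩ := Fin.exists_succ_eq_of_ne_zero hbne
      rw [hg c]
      rcases Fin.eq_zero_or_eq_succ a with rfl | ⟨e, rfl⟩
      · rw [hg0]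
        exact htail_lt c
      · rw [hg e]
        exact hUt.2.2.2.2 (Fin.succ_lt_succ_iff.mp hab)

lemma relHN_tail {r : ℕ} {U : Fin (r+2) → ∀ i, Submodule ℂ (Fin (d i) → ℂ)} {W T}
    (h : RelHN s t θ M (r+1) U W T) :
    RelHN s t θ M r (fun κ : Fin (r+1) => U κ.succ) (U 1) T := by
  refine ⟨?_, ?_, ?_, ?_, ?_⟩
  · show U (0 : Fin (r+1)).succ = U 1
    congr 1
  · show U (Fin.last r).succ = T
    rw [Fin.succ_last]; exact h.2.1
  · intro ν; exact h.2.2.1 ν.succ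
  · intro ν
    have := h.2.2.2.1 ν.succ
    rwa [← Fin.succ_castSucc] at this
  · intro a b hab
    simp only
    have := h.2.2.2.2 (show a.succ < b.succ from Fin.succ_lt_succ_iff.mpr hab)
    simp only at this
    rwa [← Fin.succ_castSucc, ← Fin.succ_castSucc] at this

lemma relHN_first_facts {r : ℕ} {U : Fin (r+2) → ∀ i, Submodule ℂ (Fin (d i) → ℂ)} {W T}
    (h : RelHN s t θ M (r+1) U W T) :
    IsSubrep s t M (U 1) ∧ W ≤ U 1 ∧ U 1 ≤ T ∧ U 1 ≠ W := by
  have hss := h.2.2.2.1 0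
  rw [Fin.castSucc_zero, Fin.succ_zero_eq_one, h.1] at hss
  refine ⟨hss.1, hss.2.2.1, ?_, Ne.symm hss.2.2.2.1⟩
  rw [← h.2.1]
  exact relHN_monotone h (Fin.le_last _)

lemma relHN_le_first {r : ℕ} {U : Fin (r+2) → ∀ i, Submodule ℂ (Fin (d i) → ℂ)} {W T}
    (h : RelHN s t θ M (r+1) U W T) :
    ∀ Y, IsSubrep s t M Y → W ≤ Y → Y ≤ T → Y ≠ W →
      slopeQuot θ Y W ≤ slopeQuot θ (U 1) W ∧
      (slopeQuot θ Y W = slopeQuot θ (U 1) W → Y ≤ U 1) := by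
  have hmono := relHN_monotone h
  have hU1 : U (⟨1, by omega⟩ : Fin (r+2)) = U 1 := by
    congr 1
  have aux : ∀ k : ℕ, ∀ hk : k ≤ r, ∀ Y, IsSubrep s t M Y → W ≤ Y →
      Y ≤ U ⟨k+1, by omega⟩ → Y ≠ W →
      slopeQuot θ Y W ≤ slopeQuot θ (U 1) W ∧
      (slopeQuot θ Y W = slopeQuot θ (U 1) W → Y ≤ U 1) := by
    intro k
    induction k with
    | zero =>
      intro hk Y hY hWY hle hne
      have hss := h.2.2.2.1 (⟨0, by omega⟩ : Fin (r+1))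
      have e1 : ((⟨0, by omega⟩ : Fin (r+1))).succ = (1 : Fin (r+2)) := Fin.ext (by simp)
      have e2 : ((⟨0, by omega⟩ : Fin (r+1))).castSucc = (0 : Fin (r+2)) := Fin.ext (by simp)
      rw [e1, e2, h.1] at hss
      have hle' : Y ≤ U 1 := by rwa [hU1] at hle
      exact ⟨hss.2.2.2.2 Y hY hWY hle' hne, fun _ => hle'⟩
    | succ k IHk =>
      intro hk Y hY hWY hle hne
      by_cases hYP : Y ≤ U ⟨k+1, by omega⟩
      · exact IHk (by omega) Y hY hWY hYP hne
      · set ν : Fin (r+1) := ⟨k+1, by omega⟩ with hν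
        have ecs : ν.castSucc = (⟨k+1, by omega⟩ : Fin (r+2)) := Fin.ext (by simp [hν])
        have esc : ν.succ = (⟨k+2, by omega⟩ : Fin (r+2)) := Fin.ext (by simp [hν])
        set P := U ν.castSucc with hP
        have hYP' : ¬ Y ≤ P := by rwa [hP, ecs]
        have hssν := h.2.2.2.1 ν
        set X := Y ⊓ P with hX
        set Y' := Y ⊔ P with hY'
        have hPsub : IsSubrep s t M P := h.2.2.1 _
        have hXsub : IsSubrep s t M X := IsSubrep.inf s t M hY hPsub
        have hY'sub : IsSubrep s t M Y' := IsSubrep.sup s t M hY hPsub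
        have hY'le : Y' ≤ U ν.succ := by
          apply sup_le
          · rw [esc]; exact hle
          · exact hssν.2.2.1
        have hY'ne : Y' ≠ P := by
          intro hc
          exact hYP' (le_sup_left.trans hc.le)
        have hPY' : P ≤ Y' := le_sup_right
        have hslY' : slopeQuot θ Y' P ≤ slopeQuot θ (U ν.succ) P :=
          hssν.2.2.2.2 Y' hY'sub hPY' hY'le hY'ne
        -- strict anti: step ν < step 0
        have hν0 : (⟨0, by omega⟩ : Fin (r+1)) < ν := by
          rw [hν]; exact Fin.mk_lt_mk.mpr (by omega)
        have hμlt : slopeQuot θ (U ν.succ) (U ν.castSucc) < slopeQuot θ (U 1) W := by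
          have := h.2.2.2.2 hν0
          simp only at this
          have e1 : ((⟨0, by omega⟩ : Fin (r+1))).succ = (1 : Fin (r+2)) := Fin.ext (by simp)
          have e2 : ((⟨0, by omega⟩ : Fin (r+1))).castSucc = (0 : Fin (r+2)) := Fin.ext (by simp)
          rwa [e1, e2, h.1] at this
        have hb_lt : slopeQuot θ Y X < slopeQuot θ (U 1) W := by
          have heq : slopeQuot θ Y' P = slopeQuot θ Y X := by
            rw [hY', hX]; exact slopeQuot_sup_inf θ Y P
          rw [← heq]
          exact lt_of_le_of_lt (hslY'.trans (le_of_eq rfl)) hμlt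
        have hXY : X ≤ Y := inf_le_left
        have hXneY : X ≠ Y := by
          intro hc
          apply hYP'
          rw [← inf_eq_left (a := Y) (b := P)]
          rw [hX] at hc
          rw [inf_comm] at hc ⊢
          exact hc
        have hWX : W ≤ X := by
          apply le_inf hWY
          rw [hP, ← h.1]
          exact hmono (Fin.zero_le _)
        by_cases hXW : X = W
        · have : slopeQuot θ Y W < slopeQuot θ (U 1) W := by rw [hXW] at hb_lt; exact hb_lt
          exact ⟨le_of_lt this, fun hc => absurd hc (ne_of_lt this)⟩
        · have ha : slopeQuot θ X W ≤ slopeQuot θ (U 1) W := by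
            have hXle : X ≤ U ⟨k+1, by omega⟩ := by
              rw [← ecs, ← hP]; exact inf_le_right
            exact (IHk (by omega) X hXsub hWX hXle hXW).1
          have hcombo := slopeQuot_combo θ (W := W) (X := X) (Y := Y) hWX hXY
            (Ne.symm hXW) hXneY
          have pm : 0 < denQ X W := denQ_pos hWX (Ne.symm hXW)
          have pn : 0 < denQ Y X := denQ_pos hXY hXneY
          have : slopeQuot θ Y W < slopeQuot θ (U 1) W := by
            rw [hcombo]
            exact combo_lt pm pn ha hb_lt
          exact ⟨le_of_lt this, fun hc => absurd hc (ne_of_lt this)⟩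
  intro Y hY hWY hYT hne
  apply aux r le_rfl Y hY hWY _ hne
  have : (⟨r+1, by omega⟩ : Fin (r+2)) = Fin.last (r+1) := rfl
  rw [this, h.2.1]
  exact hYT

end

section
variable {V A : Type} [Fintype V] {s t : A → V} {θ : V → ℤ} {d : V → ℕ}
    {M : ∀ a : A, (Fin (d (s a)) → ℂ) →ₗ[ℂ] (Fin (d (t a)) → ℂ)}

lemma relHN_unique : ∀ (r : ℕ) (W T : ∀ i, Submodule ℂ (Fin (d i) → ℂ))
    (U : Fin (r+1) → ∀ i, Submodule ℂ (Fin (d i) → ℂ)), RelHN s t θ M r U W T →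
    ∀ (r' : ℕ) (U' : Fin (r'+1) → ∀ i, Submodule ℂ (Fin (d i) → ℂ)),
      RelHN s t θ M r' U' W T →
    r' = r ∧ HEq U' U := by
  intro r
  induction r with
  | zero =>
    intro W T U hU r' U' hU'
    have hTW : T = W := by
      rw [← hU.2.1, ← hU.1]
      exact congrArg U (Subsingleton.elim (α := Fin 1) _ _)
    rcases r' with _ | m
    · refine ⟨rfl, heq_of_eq (funext fun ν => ?_)⟩
      have h1 : U' ν = U' 0 := congrArg U' (Subsingleton.elim (α := Fin 1) ν 0)
      have h2 : U ν = U 0 := congrArg U (Subsingleton.elim (α := Fin 1) ν 0)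
      rw [h1, h2, hU.1, hU'.1]
    · exfalso
      obtain ⟨_, hW1, h1T, h1ne⟩ := relHN_first_facts hU'
      exact h1ne (le_antisymm (hTW ▸ h1T) hW1)
  | succ m IHm =>
    intro W T U hU r' U' hU'
    rcases r' with _ | m'
    · exfalso
      have hTW : T = W := by
        rw [← hU'.2.1, ← hU'.1]
        exact congrArg U' (Subsingleton.elim (α := Fin 1) _ _)
      obtain ⟨_, hW1, h1T, h1ne⟩ := relHN_first_facts hU
      exact h1ne (le_antisymm (hTW ▸ h1T) hW1)
    · obtain ⟨hsub1, hW1, h1T, h1ne⟩ := relHN_first_facts hU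
      obtain ⟨hsub1', hW1', h1T', h1ne'⟩ := relHN_first_facts hU'
      have hle := relHN_le_first hU (U' 1) hsub1' hW1' h1T' h1ne'
      have hle' := relHN_le_first hU' (U 1) hsub1 hW1 h1T h1ne
      have heqsl : slopeQuot θ (U' 1) W = slopeQuot θ (U 1) W :=
        le_antisymm hle.1 hle'.1
      have hN : U' 1 = U 1 :=
        le_antisymm (hle.2 heqsl) (hle'.2 heqsl.symm)
      have htail := relHN_tail hU
      have htail' := relHN_tail hU'
      rw [hN] at htail'
      obtain ⟨hm, hheq⟩ := IHm (U 1) T _ htail m' _ htail'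
      subst hm
      have htls := eq_of_heq hheq
      refine ⟨rfl, heq_of_eq (funext fun ν => ?_)⟩
      induction ν using Fin.cases with
      | zero => rw [hU.1, hU'.1]
      | succ κ => exact congrFun htls κ

end


/-- every finite-dimensional representation of a quiver possesses
a unique Harder–Narasimhan filtration. -/
theorem hn_filtration_exists_unique {V A : Type} [Fintype V] (s t : A → V)
    (θ : V → ℤ) (d : V → ℕ)
    (M : ∀ a : A, (Fin (d (s a)) → ℂ) →ₗ[ℂ] (Fin (d (t a)) → ℂ)) :
    ∃ (r : ℕ) (U : Fin (r + 1) → ∀ i, Submodule ℂ (Fin (d i) → ℂ)),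
      IsHNFiltration s t θ M r U ∧
      ∀ (r' : ℕ) (U' : Fin (r' + 1) → ∀ i, Submodule ℂ (Fin (d i) → ℂ)),
        IsHNFiltration s t θ M r' U' →
        ∃ h : r' = r, ∀ ν : Fin (r' + 1),
          U' ν = U (Fin.cast (by rw [h]) ν) := by
  have hbot : IsSubrep s t M (fun _ => ⊥) := isSubrep_bot s t M
  have htop : IsSubrep s t M (fun _ => ⊤) := isSubrep_top s t M
  obtain ⟨r, U, hU⟩ := exists_relHN (M := M) (θ := θ) (fun _ => ⊤) htop
    (dimN (d := d) (fun _ => ⊤)) (fun _ => ⊥) hbot (fun i => bot_le) (Nat.sub_le _ _)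
  refine ⟨r, U, hU, ?_⟩
  intro r' U' hU'
  obtain ⟨h, hheq⟩ := relHN_unique r _ _ U hU r' U' hU'
  refine ⟨h, ?_⟩
  subst h
  intro ν
  rw [eq_of_heq hheq]
  congr 1
end

section
/- For the one-vertex quiver with no arrows, the CoHa product of f ∈ Q[x_1,...,x_d]^{S_d} and g ∈ Q[x_1,...,x_e]^{S_e} is given by the shuffle formula (f*g)(x_1,...,x_{d+e}) = Σ_σ f(x_{σ(1)},...,x_{σ(d)}) g(x_{σ(d+1)},...,x_{σ(d+e)}) / Π_{μ=1}^{d} Π_{ν=d+1}^{d+e} (x_{σ(ν)} − x_{σ(μ)}), where σ ranges over (d,e)-shuffles, and this expression is a symmetric polynomial in x_1,...,x_{d+e} (the apparent denominators cancel). -/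
open MvPolynomial

attribute [local instance] Classical.propDecidable

/-- `σ ∈ S_{d+e}` is a `(d,e)`-shuffle: it is strictly increasing on the first
`d` positions and on the last `e` positions. -/
def IsShuffle {d e : ℕ} (σ : Equiv.Perm (Fin (d + e))) : Prop :=
  StrictMono (fun i : Fin d => σ (Fin.castAdd e i)) ∧
    StrictMono (fun j : Fin e => σ (Fin.natAdd d j))

/-!
Each term of the shuffle sum depends only on the coset `σ (S_d × S_e)`, so summing over all of
`S_{d+e}` instead of the shuffles multiplies the sum by `d! e!`. The full sum is invariant under
`S_{d+e}`, and multiplying it by the Vandermonde product `V = ∏_{i<j} (X j - X i)` gives a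
polynomial, because every denominator divides `V`. That polynomial is then alternating, hence
divisible by `V` (each factor `X j - X i` is prime and divides it), and the quotient is symmetric.
-/

namespace MvPolynomial

section XSubX

variable {R σ : Type*} [CommRing R] [DecidableEq σ]

-- `rename (Function.update id i j)` is the substitution `X i ↦ X j`.
theorem X_sub_X_dvd_sub_rename_update (i j : σ) (p : MvPolynomial σ R) :
    X i - X j ∣ p - rename (Function.update id i j) p := by
  induction p using MvPolynomial.induction_on with
  | C a => simp
  | add p q hp hq =>
    rw [map_add, add_sub_add_comm]
    exact dvd_add hp hq
  | mul_X p k hp =>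
    have hX : X i - X j ∣ (X k - X (Function.update id i j k) : MvPolynomial σ R) := by
      rcases eq_or_ne k i with rfl | hk
      · simp
      · simp [Function.update_of_ne hk]
    rw [map_mul, rename_X]
    convert dvd_add (hp.mul_right (X k)) (hX.mul_left (rename (Function.update id i j) p)) using 1
    ring

theorem rename_update_comp_swap (i j : σ) (p : MvPolynomial σ R) :
    rename (Function.update id i j) (rename (Equiv.swap i j) p) =
      rename (Function.update id i j) p := by
  rw [rename_rename]
  congr 2
  funext k
  simp only [Function.comp_apply, Equiv.swap_apply_def, Function.update_apply, id]
  split_ifs <;> simp_all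

theorem X_sub_X_dvd_of_rename_swap [IsDomain R] [CharZero R] {i j : σ} {p : MvPolynomial σ R}
    (hp : rename (Equiv.swap i j) p = -p) : X i - X j ∣ p := by
  have hzero : rename (Function.update id i j) p = 0 := by
    have := rename_update_comp_swap i j p
    rw [hp, map_neg, neg_eq_iff_add_eq_zero] at this
    exact add_self_eq_zero.1 this
  simpa [hzero] using X_sub_X_dvd_sub_rename_update (R := R) i j p

theorem eq_or_eq_of_X_sub_X_dvd [Nontrivial R] {i j k l : σ} (hkl : k ≠ l)
    (h : (X j - X i : MvPolynomial σ R) ∣ X l - X k) : (k = i ∧ l = j) ∨ (k = j ∧ l = i) := by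
  have h0 := map_dvd (rename (R := R) (Function.update id i j)) h
  rw [map_sub, map_sub, rename_X, rename_X, rename_X, rename_X, Function.update_self] at h0
  simp only [Function.update_apply, id, ite_self, sub_self, zero_dvd_iff, sub_eq_zero, X_inj] at h0
  grind

theorem prime_X_sub_X [IsDomain R] {i j : σ} (h : i ≠ j) :
    Prime (X j - X i : MvPolynomial σ R) := by
  -- as a polynomial in `X j` over the other variables it is `X - C (X i)`
  classical
  let e : MvPolynomial σ R ≃ₐ[R] Polynomial (MvPolynomial {b : σ // b ≠ j} R) :=
    (renameEquiv R (Equiv.optionSubtypeNe j).symm).trans (optionEquivLeft R {b : σ // b ≠ j})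
  have he : e (X j - X i) = Polynomial.X - Polynomial.C (X ⟨i, h⟩) := by
    simp [e, renameEquiv_apply, Equiv.optionSubtypeNe_symm_of_ne h, optionEquivLeft_X_none,
      optionEquivLeft_X_some]
  exact (MulEquiv.prime_iff e.toRingEquiv.toMulEquiv).mp (he ▸ Polynomial.prime_X_sub_C _)

end XSubX

section Vandermonde

variable (n : ℕ) (R : Type*) [CommRing R]

noncomputable def vandermonde : MvPolynomial (Fin n) R :=
  ∏ i : Fin n, ∏ j ∈ Finset.Ioi i, (X j - X i)

variable {n R}

theorem rename_vandermonde (τ : Equiv.Perm (Fin n)) :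
    rename τ (vandermonde n R) = (Equiv.Perm.sign τ : ℤ) * vandermonde n R := by
  have hmap : (rename τ : MvPolynomial (Fin n) R →ₐ[R] _).mapMatrix (Matrix.vandermonde X) =
      (Matrix.vandermonde X).submatrix τ id := by
    ext a b
    simp [Matrix.vandermonde]
  rw [vandermonde, ← Matrix.det_vandermonde, AlgHom.map_det, hmap, Matrix.det_permute]

theorem X_sub_X_dvd_vandermonde {i j : Fin n} (h : i ≠ j) :
    X j - X i ∣ vandermonde n R := by
  have hfactor {a b : Fin n} (hab : a < b) : X b - X a ∣ vandermonde n R :=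
    (Finset.dvd_prod_of_mem (fun b => X b - X a) (Finset.mem_Ioi.2 hab)).trans
      (Finset.dvd_prod_of_mem (fun a => ∏ b ∈ Finset.Ioi a, (X b - X a)) (Finset.mem_univ a))
  rcases h.lt_or_gt with h | h
  · exact hfactor h
  · rw [← neg_sub, neg_dvd]
    exact hfactor h

variable [IsDomain R]

theorem vandermonde_ne_zero : vandermonde n R ≠ 0 := by
  refine Finset.prod_ne_zero_iff.2 fun i _ => Finset.prod_ne_zero_iff.2 fun j hj => ?_
  exact sub_ne_zero.2 (X_injective.ne (Finset.mem_Ioi.1 hj).ne')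

variable [UniqueFactorizationMonoid R] [CharZero R]

theorem vandermonde_dvd_of_rename_swap {p : MvPolynomial (Fin n) R}
    (hp : ∀ i j : Fin n, i ≠ j → rename (Equiv.swap i j) p = -p) : vandermonde n R ∣ p := by
  rw [vandermonde, Finset.prod_sigma']
  refine Finset.prod_dvd_of_isRelPrime (fun q hq q' hq' hne => ?_) fun q hq => ?_
  · have hlt := Finset.mem_Ioi.1 (Finset.mem_sigma.1 hq).2
    have hlt' := Finset.mem_Ioi.1 (Finset.mem_sigma.1 hq').2
    refine (prime_X_sub_X hlt.ne).irreducible.isRelPrime_iff_not_dvd.2 fun hdvd => hne ?_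
    rcases eq_or_eq_of_X_sub_X_dvd hlt'.ne hdvd with ⟨h1, h2⟩ | ⟨h1, h2⟩
    · exact Sigma.ext h1.symm (heq_of_eq h2.symm)
    · exact absurd (h2 ▸ h1 ▸ hlt') hlt.asymm
  · have hne := (Finset.mem_Ioi.1 (Finset.mem_sigma.1 hq).2).ne'
    exact X_sub_X_dvd_of_rename_swap (hp q.2 q.1 hne)

theorem exists_isSymmetric_eq_vandermonde_mul {p : MvPolynomial (Fin n) R}
    (hp : ∀ τ : Equiv.Perm (Fin n), rename τ p = (Equiv.Perm.sign τ : ℤ) * p) :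
    ∃ h : MvPolynomial (Fin n) R, h.IsSymmetric ∧ p = vandermonde n R * h := by
  obtain ⟨h, rfl⟩ := vandermonde_dvd_of_rename_swap fun i j hij => by
    rw [hp, Equiv.Perm.sign_swap hij]
    simp
  refine ⟨h, fun τ => ?_, rfl⟩
  have hsign : ((Equiv.Perm.sign τ : ℤ) : MvPolynomial (Fin n) R) ≠ 0 :=
    Int.cast_ne_zero.2 (Units.ne_zero _)
  have := hp τ
  rw [map_mul, rename_vandermonde, mul_assoc] at this
  exact mul_left_cancel₀ vandermonde_ne_zero (mul_left_cancel₀ hsign this)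

end Vandermonde

section FractionRing

variable {σ R : Type*} [CommRing R]

noncomputable def renameFractionRing (τ : Equiv.Perm σ) :
    FractionRing (MvPolynomial σ R) ≃+* FractionRing (MvPolynomial σ R) :=
  IsFractionRing.ringEquivOfRingEquiv (renameEquiv R τ).toRingEquiv

theorem renameFractionRing_algebraMap (τ : Equiv.Perm σ) (p : MvPolynomial σ R) :
    renameFractionRing τ (algebraMap (MvPolynomial σ R) (FractionRing (MvPolynomial σ R)) p) =
      algebraMap _ _ (rename τ p) :=
  IsFractionRing.ringEquivOfRingEquiv_algebraMap _ p

theorem exists_isSymmetric_algebraMap_eq_of_mul_vandermonde [IsDomain R]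
    [UniqueFactorizationMonoid R] [CharZero R] {n : ℕ} {x : FractionRing (MvPolynomial (Fin n) R)}
    (hx : ∀ τ, renameFractionRing τ x = x) {p : MvPolynomial (Fin n) R}
    (hp : x * algebraMap _ _ (vandermonde n R) = algebraMap _ _ p) :
    ∃ h : MvPolynomial (Fin n) R, h.IsSymmetric ∧ algebraMap _ _ h = x := by
  have hanti (τ : Equiv.Perm (Fin n)) : rename τ p = (Equiv.Perm.sign τ : ℤ) * p := by
    refine IsFractionRing.injective (MvPolynomial (Fin n) R)
      (FractionRing (MvPolynomial (Fin n) R)) ?_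
    rw [← renameFractionRing_algebraMap, ← hp, map_mul, hx, renameFractionRing_algebraMap,
      rename_vandermonde, map_mul, map_intCast, map_mul, map_intCast, ← hp]
    ring
  obtain ⟨h, hsym, rfl⟩ := exists_isSymmetric_eq_vandermonde_mul hanti
  refine ⟨h, hsym, ?_⟩
  have hV : algebraMap _ (FractionRing (MvPolynomial (Fin n) R)) (vandermonde n R) ≠ 0 :=
    (map_ne_zero_iff _ (IsFractionRing.injective _ _)).2 vandermonde_ne_zero
  rw [map_mul, mul_comm] at hp
  exact (mul_left_cancel₀ hV hp).symm

end FractionRing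

end MvPolynomial

theorem Fin.castAdd_ne_natAdd {d e : ℕ} (i : Fin d) (j : Fin e) :
    Fin.castAdd e i ≠ Fin.natAdd d j := by
  simp only [ne_eq, Fin.ext_iff, Fin.val_castAdd, Fin.val_natAdd]
  omega

section Shuffle

open Equiv

variable {d e : ℕ}

def blockPerm (α : Perm (Fin d)) (β : Perm (Fin e)) : Perm (Fin (d + e)) :=
  finSumFinEquiv.permCongr (α.sumCongr β)

@[simp]
theorem blockPerm_castAdd (α : Perm (Fin d)) (β : Perm (Fin e)) (i : Fin d) :
    blockPerm α β (Fin.castAdd e i) = Fin.castAdd e (α i) := by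
  simp [blockPerm, Equiv.permCongr_apply]

@[simp]
theorem blockPerm_natAdd (α : Perm (Fin d)) (β : Perm (Fin e)) (j : Fin e) :
    blockPerm α β (Fin.natAdd d j) = Fin.natAdd d (β j) := by
  simp [blockPerm, Equiv.permCongr_apply]

theorem blockPerm_mul (α α' : Perm (Fin d)) (β β' : Perm (Fin e)) :
    blockPerm α β * blockPerm α' β' = blockPerm (α * α') (β * β') := by
  ext x
  induction x using Fin.addCases <;> simp

theorem blockPerm_inj {α α' : Perm (Fin d)} {β β' : Perm (Fin e)}
    (h : blockPerm α β = blockPerm α' β') : α = α' ∧ β = β' := by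
  refine ⟨Equiv.ext fun i => ?_, Equiv.ext fun j => ?_⟩
  · simpa using congr($h (Fin.castAdd e i))
  · simpa using congr($h (Fin.natAdd d j))

theorem exists_isShuffle_mul_blockPerm_eq (σ : Perm (Fin (d + e))) :
    ∃ (s : Perm (Fin (d + e))) (α : Perm (Fin d)) (β : Perm (Fin e)),
      IsShuffle s ∧ s * blockPerm α β = σ := by
  have hmono_left := Tuple.monotone_sort fun i : Fin d => σ (Fin.castAdd e i)
  have hmono_right := Tuple.monotone_sort fun j : Fin e => σ (Fin.natAdd d j)
  set a := Tuple.sort fun i : Fin d => σ (Fin.castAdd e i)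
  set b := Tuple.sort fun j : Fin e => σ (Fin.natAdd d j)
  refine ⟨σ * blockPerm a b, a⁻¹, b⁻¹, ⟨?_, ?_⟩, ?_⟩
  · simp only [Perm.mul_apply, blockPerm_castAdd]
    exact hmono_left.strictMono_of_injective fun i i' h => by simpa using h
  · simp only [Perm.mul_apply, blockPerm_natAdd]
    exact hmono_right.strictMono_of_injective fun j j' h => by simpa using h
  · rw [mul_assoc, blockPerm_mul, mul_inv_cancel, mul_inv_cancel]
    ext x
    induction x using Fin.addCases <;> simp

theorem StrictMono.eq_of_comp_perm_eq {ι β : Type*} [LinearOrder ι] [WellFoundedLT ι]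
    [Preorder β] {f g : ι → β} (hf : StrictMono f) (hg : StrictMono g) {α α' : Perm ι}
    (h : f ∘ α = g ∘ α') : f = g :=
  (hf.range_inj hg).1 (by rw [← EquivLike.range_comp f α, h, EquivLike.range_comp])

theorem IsShuffle.eq_of_mul_blockPerm_eq {s s' : Perm (Fin (d + e))} (hs : IsShuffle s)
    (hs' : IsShuffle s') {α α' : Perm (Fin d)} {β β' : Perm (Fin e)}
    (h : s * blockPerm α β = s' * blockPerm α' β') : s = s' := by
  have hleft := hs.1.eq_of_comp_perm_eq hs'.1 (α := α) (α' := α') <| by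
    funext i
    simpa using congr($h (Fin.castAdd e i))
  have hright := hs.2.eq_of_comp_perm_eq hs'.2 (α := β) (α' := β') <| by
    funext j
    simpa using congr($h (Fin.natAdd d j))
  ext x
  induction x using Fin.addCases with
  | left i => exact congr(($hleft i : ℕ))
  | right j => exact congr(($hright j : ℕ))

theorem bijective_isShuffle_mul_blockPerm :
    Function.Bijective fun x : {s : Perm (Fin (d + e)) // IsShuffle s} ×
        Perm (Fin d) × Perm (Fin e) => x.1.1 * blockPerm x.2.1 x.2.2 := by
  refine ⟨fun ⟨s, α, β⟩ ⟨s', α', β'⟩ h => ?_, fun σ => ?_⟩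
  · obtain rfl : s = s' := Subtype.ext (s.2.eq_of_mul_blockPerm_eq s'.2 h)
    obtain ⟨rfl, rfl⟩ := blockPerm_inj (mul_left_cancel h)
    rfl
  · obtain ⟨s, α, β, hs, rfl⟩ := exists_isShuffle_mul_blockPerm_eq σ
    exact ⟨(⟨s, hs⟩, α, β), rfl⟩

theorem sum_perm_eq_nsmul_sum_isShuffle {M : Type*} [AddCommMonoid M]
    (φ : Perm (Fin (d + e)) → M) (hφ : ∀ σ α β, φ (σ * blockPerm α β) = φ σ) :
    ∑ σ, φ σ = (d.factorial * e.factorial) • ∑ σ ∈ Finset.univ.filter IsShuffle, φ σ := by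
  have hsub : ∑ σ ∈ Finset.univ.filter IsShuffle, φ σ = ∑ s : {s // IsShuffle s}, φ s.1 :=
    Finset.sum_subtype _ (fun σ => by simp) φ
  rw [← Fintype.sum_bijective _ bijective_isShuffle_mul_blockPerm (fun x => φ x.1.1) φ
      fun x => (hφ _ _ _).symm, Fintype.sum_prod_type, hsub]
  simp only [Finset.sum_const, Finset.card_univ, Fintype.card_prod, Fintype.card_perm,
    Fintype.card_fin, Finset.smul_sum]

end Shuffle

section ShuffleProduct

open Equiv

variable {R : Type*} [CommRing R] {d e : ℕ}

noncomputable def shuffleNumerator (f : MvPolynomial (Fin d) R) (g : MvPolynomial (Fin e) R)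
    (σ : Perm (Fin (d + e))) : MvPolynomial (Fin (d + e)) R :=
  rename (fun i => σ (Fin.castAdd e i)) f * rename (fun j => σ (Fin.natAdd d j)) g

variable (R) in
noncomputable def shuffleDenominator (σ : Perm (Fin (d + e))) : MvPolynomial (Fin (d + e)) R :=
  ∏ μ : Fin d, ∏ ν : Fin e, (X (σ (Fin.natAdd d ν)) - X (σ (Fin.castAdd e μ)))

theorem rename_shuffleNumerator (f : MvPolynomial (Fin d) R) (g : MvPolynomial (Fin e) R)
    (τ σ : Perm (Fin (d + e))) :
    rename τ (shuffleNumerator f g σ) = shuffleNumerator f g (τ * σ) := by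
  rw [shuffleNumerator, map_mul, rename_rename, rename_rename]
  rfl

theorem rename_shuffleDenominator (τ σ : Perm (Fin (d + e))) :
    rename τ (shuffleDenominator R σ) = shuffleDenominator R (τ * σ) := by
  simp [shuffleDenominator, map_prod, Perm.mul_apply]

theorem shuffleNumerator_mul_blockPerm {f : MvPolynomial (Fin d) R} {g : MvPolynomial (Fin e) R}
    (hf : f.IsSymmetric) (hg : g.IsSymmetric) (σ : Perm (Fin (d + e))) (α : Perm (Fin d))
    (β : Perm (Fin e)) : shuffleNumerator f g (σ * blockPerm α β) = shuffleNumerator f g σ := by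
  have hleft : (fun i => (σ * blockPerm α β) (Fin.castAdd e i)) =
      (fun i => σ (Fin.castAdd e i)) ∘ α := by
    funext i
    simp
  have hright : (fun j => (σ * blockPerm α β) (Fin.natAdd d j)) =
      (fun j => σ (Fin.natAdd d j)) ∘ β := by
    funext j
    simp
  rw [shuffleNumerator, shuffleNumerator, hleft, hright, ← rename_rename, ← rename_rename, hf, hg]

theorem shuffleDenominator_mul_blockPerm (σ : Perm (Fin (d + e))) (α : Perm (Fin d))
    (β : Perm (Fin e)) : shuffleDenominator R (σ * blockPerm α β) = shuffleDenominator R σ := by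
  simp only [shuffleDenominator, Perm.mul_apply, blockPerm_castAdd, blockPerm_natAdd]
  exact Fintype.prod_equiv α _ _ fun μ => Fintype.prod_equiv β _ _ fun ν => rfl

theorem shuffleDenominator_dvd_vandermonde [IsDomain R] [UniqueFactorizationMonoid R]
    (σ : Perm (Fin (d + e))) : shuffleDenominator R σ ∣ vandermonde (d + e) R := by
  have hne (x y : Fin d × Fin e) : σ (Fin.castAdd e x.1) ≠ σ (Fin.natAdd d y.2) :=
    σ.injective.ne (Fin.castAdd_ne_natAdd _ _)
  rw [shuffleDenominator, ← Fintype.prod_prod_type']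
  refine Fintype.prod_dvd_of_isRelPrime (fun x y hxy => ?_) fun x =>
    X_sub_X_dvd_vandermonde (hne x x)
  refine (prime_X_sub_X (hne x x)).irreducible.isRelPrime_iff_not_dvd.2 fun hdvd => hxy ?_
  rcases eq_or_eq_of_X_sub_X_dvd (hne y y) hdvd with ⟨h1, h2⟩ | ⟨h1, -⟩
  · exact Prod.ext (Fin.castAdd_injective d e (σ.injective h1)).symm
      (Fin.natAdd_injective e d (σ.injective h2)).symm
  · exact absurd h1 (hne y x)

variable [IsDomain R]

noncomputable def shuffleTerm (f : MvPolynomial (Fin d) R) (g : MvPolynomial (Fin e) R)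
    (σ : Perm (Fin (d + e))) : FractionRing (MvPolynomial (Fin (d + e)) R) :=
  algebraMap _ _ (shuffleNumerator f g σ) / algebraMap _ _ (shuffleDenominator R σ)

theorem renameFractionRing_shuffleTerm (f : MvPolynomial (Fin d) R) (g : MvPolynomial (Fin e) R)
    (τ σ : Perm (Fin (d + e))) :
    renameFractionRing τ (shuffleTerm f g σ) = shuffleTerm f g (τ * σ) := by
  rw [shuffleTerm, map_div₀, renameFractionRing_algebraMap, renameFractionRing_algebraMap,
    rename_shuffleNumerator, rename_shuffleDenominator, shuffleTerm]

theorem renameFractionRing_sum_shuffleTerm (f : MvPolynomial (Fin d) R)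
    (g : MvPolynomial (Fin e) R) (τ : Perm (Fin (d + e))) :
    renameFractionRing τ (∑ σ, shuffleTerm f g σ) = ∑ σ, shuffleTerm f g σ := by
  rw [map_sum]
  simp only [renameFractionRing_shuffleTerm]
  exact Fintype.sum_equiv (Equiv.mulLeft τ) _ _ fun σ => rfl

theorem sum_shuffleTerm_eq_nsmul {f : MvPolynomial (Fin d) R} {g : MvPolynomial (Fin e) R}
    (hf : f.IsSymmetric) (hg : g.IsSymmetric) :
    ∑ σ, shuffleTerm f g σ =
      (d.factorial * e.factorial) • ∑ σ ∈ Finset.univ.filter IsShuffle, shuffleTerm f g σ := by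
  refine sum_perm_eq_nsmul_sum_isShuffle _ fun σ α β => ?_
  rw [shuffleTerm, shuffleNumerator_mul_blockPerm hf hg, shuffleDenominator_mul_blockPerm,
    shuffleTerm]

theorem exists_sum_shuffleTerm_mul_vandermonde [UniqueFactorizationMonoid R]
    (f : MvPolynomial (Fin d) R) (g : MvPolynomial (Fin e) R) :
    ∃ p : MvPolynomial (Fin (d + e)) R,
      (∑ σ, shuffleTerm f g σ) * algebraMap _ _ (vandermonde (d + e) R) = algebraMap _ _ p := by
  choose q hq using fun σ : Perm (Fin (d + e)) => shuffleDenominator_dvd_vandermonde (R := R) σ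
  refine ⟨∑ σ, shuffleNumerator f g σ * q σ, ?_⟩
  rw [Finset.sum_mul, map_sum]
  refine Finset.sum_congr rfl fun σ _ => ?_
  have hden : algebraMap _ (FractionRing (MvPolynomial (Fin (d + e)) R))
      (shuffleDenominator R σ) ≠ 0 :=
    (map_ne_zero_iff _ (IsFractionRing.injective _ _)).2
      (ne_zero_of_dvd_ne_zero vandermonde_ne_zero ⟨q σ, hq σ⟩)
  rw [shuffleTerm, hq σ, map_mul, map_mul]
  field_simp

end ShuffleProduct

/-- for the one-vertex quiver with no arrows, the CoHa product of
symmetric polynomials `f ∈ ℚ[x_1,…,x_d]^{S_d}` and `g ∈ ℚ[x_1,…,x_e]^{S_e}`,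
given by the shuffle formula
`Σ_σ f(x_{σ(1)},…,x_{σ(d)}) g(x_{σ(d+1)},…,x_{σ(d+e)}) / Π_{μ≤d<ν}(x_{σ(ν)} − x_{σ(μ)})`
(a sum of rational functions), is a symmetric polynomial in `x_1,…,x_{d+e}`. -/
theorem coha_product_is_symmetric_polynomial (d e : ℕ)
    (f : MvPolynomial (Fin d) ℚ) (g : MvPolynomial (Fin e) ℚ)
    (hf : f.IsSymmetric) (hg : g.IsSymmetric) :
    ∃ h : MvPolynomial (Fin (d + e)) ℚ, h.IsSymmetric ∧
      algebraMap (MvPolynomial (Fin (d + e)) ℚ)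
          (FractionRing (MvPolynomial (Fin (d + e)) ℚ)) h =
        ∑ σ ∈ Finset.univ.filter
            (fun σ : Equiv.Perm (Fin (d + e)) => IsShuffle σ),
          (algebraMap (MvPolynomial (Fin (d + e)) ℚ) _
              (rename (fun i : Fin d => σ (Fin.castAdd e i)) f *
                rename (fun j : Fin e => σ (Fin.natAdd d j)) g)) /
            (algebraMap (MvPolynomial (Fin (d + e)) ℚ) _
              (∏ μ : Fin d, ∏ ν : Fin e,
                (X (σ (Fin.natAdd d ν)) - X (σ (Fin.castAdd e μ))))) := by
  obtain ⟨p, hp⟩ := exists_sum_shuffleTerm_mul_vandermonde f g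
  obtain ⟨h, hsym, hh⟩ :=
    exists_isSymmetric_algebraMap_eq_of_mul_vandermonde (renameFractionRing_sum_shuffleTerm f g) hp
  set F := FractionRing (MvPolynomial (Fin (d + e)) ℚ)
  have hscale : algebraMap (MvPolynomial (Fin (d + e)) ℚ) F
      (C ((d.factorial * e.factorial : ℕ) : ℚ)⁻¹) * ((d.factorial * e.factorial : ℕ) : F) = 1 := by
    rw [← map_natCast (algebraMap (MvPolynomial (Fin (d + e)) ℚ) F), ← map_mul,
      ← map_natCast (C : ℚ →+* MvPolynomial (Fin (d + e)) ℚ), ← C_mul,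
      inv_mul_cancel₀ (by positivity), C_1, map_one]
  refine ⟨C ((d.factorial * e.factorial : ℕ) : ℚ)⁻¹ * h, (IsSymmetric.C _).mul hsym, ?_⟩
  change _ = ∑ σ ∈ Finset.univ.filter IsShuffle, shuffleTerm f g σ
  rw [map_mul, hh, sum_shuffleTerm_eq_nsmul hf hg, nsmul_eq_mul, ← mul_assoc, hscale, one_mul]
end

section
/- In the CoHa of the one-vertex quiver with no arrows, for ψ_i ∈ H_1 = Q[x] defined by ψ_i(x) = x^i and any 0 ≤ k_1 < k_2 < ... < k_d, the iterated shuffle product satisfies (ψ_{k_1} * ψ_{k_2} * ... * ψ_{k_d})(x_1,...,x_d) = s_λ(x_1,...,x_d), the Schur polynomial attached to the partition λ = (k_d − d + 1, ..., k_2 − 1, k_1). -/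
open MvPolynomial

attribute [local instance] Classical.propDecidable

noncomputable abbrev FF (d : ℕ) : Type := FractionRing (MvPolynomial (Fin d) ℚ)

noncomputable def embF {σ τ : Type} (v : σ → τ) (hv : Function.Injective v) :
    FractionRing (MvPolynomial σ ℚ) →+* FractionRing (MvPolynomial τ ℚ) :=
  IsFractionRing.lift (g := (algebraMap (MvPolynomial τ ℚ)
      (FractionRing (MvPolynomial τ ℚ))).comp (rename v).toRingHom)
    ((IsFractionRing.injective (MvPolynomial τ ℚ)
        (FractionRing (MvPolynomial τ ℚ))).comp (rename_injective v hv))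

noncomputable def shuffleMul {d e : ℕ} (f : FF d) (g : FF e) : FF (d + e) :=
  ∑ σ ∈ Finset.univ.filter (fun σ : Equiv.Perm (Fin (d + e)) => IsShuffle σ),
    embF (fun i : Fin d => σ (Fin.castAdd e i))
        (σ.injective.comp (Fin.castAdd_injective d e)) f *
      embF (fun j : Fin e => σ (Fin.natAdd d j)) (σ.injective.comp (Fin.natAddEmb d).injective) g *
      (algebraMap (MvPolynomial (Fin (d + e)) ℚ) (FF (d + e))
        (∏ μ : Fin d, ∏ ν : Fin e,
          (X (σ (Fin.natAdd d ν)) - X (σ (Fin.castAdd e μ)))))⁻¹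

/-- `ψ_i ∈ H_1 = ℚ[x]`, `ψ_i(x) = x^i`. -/
noncomputable def psiF (i : ℕ) : FF 1 :=
  algebraMap (MvPolynomial (Fin 1) ℚ) (FF 1) (X 0 ^ i)

/-- The iterated (left-associated) shuffle product `ψ_{k_1} * ⋯ * ψ_{k_d}`. -/
noncomputable def iterProd : (d : ℕ) → (Fin d → ℕ) → FF d
  | 0, _ => 1
  | d + 1, k => shuffleMul (iterProd d (fun i => k i.castSucc)) (psiF (k (Fin.last d)))

/-! ### Auxiliary material -/

section Shuffles

/-- The `(d,1)`-shuffle sending `last d ↦ p` and `castSucc i ↦ p.succAbove i`. -/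
noncomputable def sp {d : ℕ} (p : Fin (d + 1)) : Equiv.Perm (Fin (d + 1)) :=
  Equiv.ofBijective (Fin.lastCases p p.succAbove)
    (Finite.injective_iff_bijective.mp (by
      intro a b hab
      induction a using Fin.lastCases with
      | last =>
        induction b using Fin.lastCases with
        | last => rfl
        | cast b =>
          simp only [Fin.lastCases_last, Fin.lastCases_castSucc] at hab
          exact absurd hab.symm (Fin.succAbove_ne p b)
      | cast a =>
        induction b using Fin.lastCases with
        | last =>
          simp only [Fin.lastCases_last, Fin.lastCases_castSucc] at hab
          exact absurd hab (Fin.succAbove_ne p a)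
        | cast b =>
          simp only [Fin.lastCases_castSucc] at hab
          rw [(Fin.strictMono_succAbove p).injective hab]))

lemma sp_last {d : ℕ} (p : Fin (d + 1)) : sp p (Fin.last d) = p := by
  simp [sp, Equiv.ofBijective_apply]

lemma sp_castSucc {d : ℕ} (p : Fin (d + 1)) (i : Fin d) :
    sp p i.castSucc = p.succAbove i := by
  simp [sp, Equiv.ofBijective_apply]

lemma natAdd_zero_eq_last (d : ℕ) : Fin.natAdd d (0 : Fin 1) = Fin.last d := by
  ext; simp

lemma sp_castAdd {d : ℕ} (p : Fin (d + 1)) (i : Fin d) :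
    sp p (Fin.castAdd 1 i) = p.succAbove i := sp_castSucc p i

lemma sp_natAdd {d : ℕ} (p : Fin (d + 1)) (j : Fin 1) :
    sp p (Fin.natAdd d j) = p := by
  have : j = 0 := Subsingleton.elim _ _
  rw [this, natAdd_zero_eq_last, sp_last]

lemma isShuffle_sp {d : ℕ} (p : Fin (d + 1)) : IsShuffle (sp p) := by
  constructor
  · have h : (fun i : Fin d => sp p (Fin.castAdd 1 i)) = p.succAbove :=
      funext (sp_castAdd p)
    rw [h]; exact Fin.strictMono_succAbove p
  · intro a b hab
    exact absurd (Subsingleton.elim a b) hab.ne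

lemma sp_uniq {d : ℕ} (σ : Equiv.Perm (Fin (d + 1))) (hσ : @IsShuffle d 1 σ) :
    sp (σ (Fin.natAdd d 0)) = σ := by
  set p := σ (Fin.natAdd d 0) with hp
  have hrange : Set.range (fun i : Fin d => σ (Fin.castAdd 1 i)) = Set.range p.succAbove := by
    rw [Fin.range_succAbove]
    ext q
    constructor
    · rintro ⟨i, rfl⟩
      simp only [Set.mem_compl_iff, Set.mem_singleton_iff]
      intro h
      have : Fin.castAdd 1 i = Fin.natAdd d 0 := σ.injective h
      have hi := i.isLt
      simp only [Fin.ext_iff, Fin.coe_castAdd, Fin.coe_natAdd] at this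
      omega
    · intro hq
      simp only [Set.mem_compl_iff, Set.mem_singleton_iff] at hq
      obtain ⟨j, rfl⟩ := σ.surjective q
      have hj : j ≠ Fin.natAdd d 0 := fun h => hq (by rw [h])
      induction j using Fin.lastCases with
      | last => exact absurd (natAdd_zero_eq_last d).symm hj.symm
      | cast i => exact ⟨i, rfl⟩
  haveI : WellFoundedLT (Fin d) := Finite.to_wellFoundedLT
  have := (StrictMono.range_inj (β := Fin d) hσ.1 (Fin.strictMono_succAbove p)).mp hrange
  ext j
  induction j using Fin.lastCases with
  | last => rw [sp_last, ← natAdd_zero_eq_last d]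
  | cast i =>
    rw [sp_castSucc, ← congrFun this i]; rfl

end Shuffles

section Vandermonde

variable {R : Type*} [CommRing R]

noncomputable def pairsT (n : ℕ) : Finset (Fin n × Fin n) :=
  Finset.univ.filter (fun q => q.1 < q.2)

lemma prod_Ioi_eq_pairs (n : ℕ) (f : Fin n → Fin n → R) :
    ∏ i : Fin n, ∏ j ∈ Finset.Ioi i, f i j = ∏ q ∈ pairsT n, f q.1 q.2 := by
  rw [Finset.prod_sigma']
  refine Finset.prod_nbij' (fun x => (x.1, x.2)) (fun q => ⟨q.1, q.2⟩) ?_ ?_ ?_ ?_ ?_ <;>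
    simp [pairsT, Finset.mem_sigma]

lemma pairsT_succ (d : ℕ) (p : Fin (d + 1)) :
    pairsT (d + 1) =
      ((pairsT d).image (fun q => (p.succAbove q.1, p.succAbove q.2)) ∪
          (Finset.Iio p).image (fun q => (q, p))) ∪
        (Finset.Ioi p).image (fun q => (p, q)) := by
  ext ⟨a, b⟩
  simp only [pairsT, Finset.mem_filter, Finset.mem_univ, true_and, Finset.mem_union,
    Finset.mem_image, Finset.mem_Iio, Finset.mem_Ioi, Prod.mk.injEq]
  constructor
  · intro hab
    by_cases ha : a = p
    · subst ha; right; exact ⟨b, hab, rfl, rfl⟩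
    · by_cases hb : b = p
      · subst hb; left; right; exact ⟨a, hab, rfl, rfl⟩
      · obtain ⟨a', ha'⟩ := Fin.exists_succAbove_eq ha
        obtain ⟨b', hb'⟩ := Fin.exists_succAbove_eq hb
        left; left
        refine ⟨(a', b'), ?_, ha', hb'⟩
        rw [← ha', ← hb', Fin.succAbove_lt_succAbove_iff] at hab
        exact hab
  · rintro ((⟨⟨a', b'⟩, hq, rfl, rfl⟩ | ⟨q, hq, rfl, rfl⟩) | ⟨q, hq, rfl, rfl⟩)
    · exact Fin.succAbove_lt_succAbove_iff.mpr hq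
    · exact hq
    · exact hq

lemma erase_eq_image_succAbove (d : ℕ) (p : Fin (d + 1)) :
    Finset.univ.erase p = Finset.univ.image p.succAbove := by
  ext q
  simp only [Finset.mem_erase, Finset.mem_univ, and_true, Finset.mem_image, true_and]
  constructor
  · intro hq
    obtain ⟨i, hi⟩ := Fin.exists_succAbove_eq hq
    exact ⟨i, hi⟩
  · rintro ⟨i, rfl⟩
    exact Fin.succAbove_ne p i

lemma vandermonde_factor (d : ℕ) (p : Fin (d + 1)) (v : Fin (d + 1) → R) :
    ∏ i : Fin (d + 1), ∏ j ∈ Finset.Ioi i, (v j - v i) =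
      (-1) ^ (d - (p : ℕ)) * (∏ μ : Fin d, (v p - v (p.succAbove μ))) *
        ∏ i : Fin d, ∏ j ∈ Finset.Ioi i, (v (p.succAbove j) - v (p.succAbove i)) := by
  have hne : ∀ i : Fin d, p.succAbove i ≠ p := Fin.succAbove_ne p
  have hdisj1 : Disjoint ((pairsT d).image (fun q => (p.succAbove q.1, p.succAbove q.2)))
      ((Finset.Iio p).image (fun q => (q, p))) := by
    rw [Finset.disjoint_left]
    rintro ⟨a, b⟩ h1 h2
    simp only [Finset.mem_image, Prod.mk.injEq] at h1 h2
    obtain ⟨⟨a', b'⟩, _, _, hb⟩ := h1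
    obtain ⟨q, _, _, hb'⟩ := h2
    exact hne b' (hb.trans hb'.symm)
  have hdisj2 : Disjoint (((pairsT d).image (fun q => (p.succAbove q.1, p.succAbove q.2)) ∪
      (Finset.Iio p).image (fun q => (q, p)))) ((Finset.Ioi p).image (fun q => (p, q))) := by
    rw [Finset.disjoint_left]
    rintro ⟨a, b⟩ h1 h2
    simp only [Finset.mem_union, Finset.mem_image, Finset.mem_Iio, Finset.mem_Ioi,
      Prod.mk.injEq] at h1 h2
    obtain ⟨q, hq, ha, _⟩ := h2
    rcases h1 with ⟨⟨a', b'⟩, _, ha', _⟩ | ⟨q', hq', ha', hb'⟩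
    · exact hne a' (ha'.trans ha.symm)
    · have hqp : q' = p := ha'.trans ha.symm
      rw [hqp] at hq'
      exact lt_irrefl p hq'
  have hinj1 : Set.InjOn (fun q : Fin d × Fin d => (p.succAbove q.1, p.succAbove q.2))
      (pairsT d) := by
    rintro ⟨a, b⟩ _ ⟨c, e⟩ _ h
    simp only [Prod.mk.injEq] at h
    have hs := (Fin.strictMono_succAbove p).injective
    exact Prod.ext (hs h.1) (hs h.2)
  have hinj2 : Set.InjOn (fun q : Fin (d + 1) => (q, p)) (Finset.Iio p) := by
    rintro a _ b _ h
    simpa using congrArg Prod.fst h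
  have hinj3 : Set.InjOn (fun q : Fin (d + 1) => (p, q)) (Finset.Ioi p) := by
    rintro a _ b _ h
    simpa using congrArg Prod.snd h
  rw [prod_Ioi_eq_pairs, prod_Ioi_eq_pairs, pairsT_succ d p, Finset.prod_union hdisj2,
    Finset.prod_union hdisj1, Finset.prod_image hinj1, Finset.prod_image hinj2,
    Finset.prod_image hinj3]
  have h3 : ∏ q ∈ Finset.Ioi p, (v q - v p) =
      (-1) ^ (d - (p : ℕ)) * ∏ q ∈ Finset.Ioi p, (v p - v q) := by
    calc ∏ q ∈ Finset.Ioi p, (v q - v p) = ∏ q ∈ Finset.Ioi p, (-1) * (v p - v q) := by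
          refine Finset.prod_congr rfl fun q _ => by ring
      _ = (∏ _q ∈ Finset.Ioi p, (-1 : R)) * ∏ q ∈ Finset.Ioi p, (v p - v q) :=
          Finset.prod_mul_distrib
      _ = (-1) ^ (d - (p : ℕ)) * ∏ q ∈ Finset.Ioi p, (v p - v q) := by
          rw [Finset.prod_const, Fin.card_Ioi]
          norm_num
  have h2 : (∏ q ∈ Finset.Iio p, (v p - v q)) * ∏ q ∈ Finset.Ioi p, (v p - v q) =
      ∏ μ : Fin d, (v p - v (p.succAbove μ)) := by
    have hd : Disjoint (Finset.Iio p) (Finset.Ioi p) := by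
      rw [Finset.disjoint_left]
      intro a h1 h2
      simp only [Finset.mem_Iio] at h1
      simp only [Finset.mem_Ioi] at h2
      exact absurd (h1.trans h2) (lt_irrefl a)
    rw [← Finset.prod_union hd]
    have hu : Finset.Iio p ∪ Finset.Ioi p = Finset.univ.erase p := by
      ext q
      simp only [Finset.mem_union, Finset.mem_Iio, Finset.mem_Ioi, Finset.mem_erase,
        Finset.mem_univ, and_true]
      omega
    rw [hu, erase_eq_image_succAbove,
      Finset.prod_image (fun a _ b _ h => (Fin.strictMono_succAbove p).injective h)]
  dsimp only
  rw [h3, ← h2]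
  ring

lemma det_pow_eq (n : ℕ) (u : Fin n → R) :
    Matrix.det (Matrix.of fun i j : Fin n => (u j) ^ (i : ℕ)) =
      ∏ i : Fin n, ∏ j ∈ Finset.Ioi i, (u j - u i) := by
  have h : (Matrix.of fun i j : Fin n => (u j) ^ (i : ℕ)) = (Matrix.vandermonde u).transpose := by
    ext i j
    simp [Matrix.vandermonde]
  rw [h, Matrix.det_transpose, Matrix.det_vandermonde]

end Vandermonde

section Emb

lemma embF_algebraMap {σ τ : Type} (v : σ → τ) (hv : Function.Injective v)
    (q : MvPolynomial σ ℚ) :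
    embF v hv (algebraMap (MvPolynomial σ ℚ) (FractionRing (MvPolynomial σ ℚ)) q) =
      algebraMap (MvPolynomial τ ℚ) (FractionRing (MvPolynomial τ ℚ)) (rename v q) := by
  simp [embF, IsFractionRing.lift_algebraMap]

lemma embF_congr {σ τ : Type} {v w : σ → τ} (h : v = w) (hv : Function.Injective v)
    (hw : Function.Injective w) : embF v hv = embF w hw := by
  subst h; rfl

lemma rename_detX {d : ℕ} {τ : Type} (v : Fin d → τ) (k : Fin d → ℕ) :
    rename (R := ℚ) v (Matrix.det (Matrix.of fun i j : Fin d =>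
        (X j : MvPolynomial (Fin d) ℚ) ^ (k i))) =
      Matrix.det (Matrix.of fun i j : Fin d => (X (v j) : MvPolynomial τ ℚ) ^ (k i)) := by
  calc rename (R := ℚ) v (Matrix.det (Matrix.of fun i j : Fin d =>
        (X j : MvPolynomial (Fin d) ℚ) ^ (k i)))
      = Matrix.det (((rename (R := ℚ) v).toRingHom).mapMatrix
          (Matrix.of fun i j : Fin d => (X j : MvPolynomial (Fin d) ℚ) ^ (k i))) :=
        RingHom.map_det _ _
    _ = _ := by
        congr 1
        ext i j
        simp

end Emb

set_option maxHeartbeats 2000000 in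
/-- The key (d,1)-shuffle product computation. -/
lemma shuffleMul_psi (d : ℕ) (f : FF d) (m : ℕ) :
    shuffleMul f (psiF m) = ∑ p : Fin (d + 1),
      embF p.succAbove (Fin.strictMono_succAbove p).injective f *
        algebraMap (MvPolynomial (Fin (d + 1)) ℚ) (FF (d + 1)) ((X p) ^ m) *
        (algebraMap (MvPolynomial (Fin (d + 1)) ℚ) (FF (d + 1))
          (∏ μ : Fin d, (X p - X (p.succAbove μ))))⁻¹ := by
  rw [shuffleMul]
  have term_eq : ∀ p : Fin (d + 1),
      embF (fun i : Fin d => (sp p) (Fin.castAdd 1 i))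
          ((sp p).injective.comp (Fin.castAdd_injective d 1)) f *
        embF (fun j : Fin 1 => (sp p) (Fin.natAdd d j))
          ((sp p).injective.comp (Fin.natAddEmb d).injective) (psiF m) *
        (algebraMap (MvPolynomial (Fin (d + 1)) ℚ) (FF (d + 1))
          (∏ μ : Fin d, ∏ ν : Fin 1,
            (X ((sp p) (Fin.natAdd d ν)) - X ((sp p) (Fin.castAdd 1 μ)))))⁻¹ =
      embF p.succAbove (Fin.strictMono_succAbove p).injective f *
        algebraMap (MvPolynomial (Fin (d + 1)) ℚ) (FF (d + 1)) ((X p) ^ m) *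
        (algebraMap (MvPolynomial (Fin (d + 1)) ℚ) (FF (d + 1))
          (∏ μ : Fin d, (X p - X (p.succAbove μ))))⁻¹ := by
    intro p
    congr 1
    · congr 1
      · rw [embF_congr (funext (sp_castAdd p)) _ (Fin.strictMono_succAbove p).injective]
      · rw [psiF, embF_algebraMap]
        congr 1
        simp [sp_natAdd]
    · congr 2
      refine Finset.prod_congr rfl fun μ _ => ?_
      rw [Fin.prod_univ_one, sp_natAdd, sp_castAdd]
  refine Finset.sum_nbij' (fun σ => σ (Fin.natAdd d 0)) (fun p => sp p) ?_ ?_ ?_ ?_ ?_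
  · intro σ _; exact Finset.mem_univ _
  · intro p _
    simp only [Finset.mem_filter, Finset.mem_univ, true_and]
    exact isShuffle_sp p
  · intro σ hσ
    simp only [Finset.mem_filter, Finset.mem_univ, true_and] at hσ
    exact sp_uniq σ hσ
  · intro p _
    exact sp_last p
  · intro σ hσ
    simp only [Finset.mem_filter, Finset.mem_univ, true_and] at hσ
    have h := term_eq (σ (Fin.natAdd d 0))
    rw [sp_uniq σ hσ] at h
    exact h

theorem key (d : ℕ) : ∀ k : Fin d → ℕ,
    iterProd d k *
        algebraMap (MvPolynomial (Fin d) ℚ) (FF d)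
          (Matrix.det (Matrix.of fun i j : Fin d =>
            (X j : MvPolynomial (Fin d) ℚ) ^ (i : ℕ))) =
      algebraMap (MvPolynomial (Fin d) ℚ) (FF d)
        (Matrix.det (Matrix.of fun i j : Fin d =>
          (X j : MvPolynomial (Fin d) ℚ) ^ (k i))) := by
  induction d with
  | zero =>
    intro k
    simp [iterProd, Matrix.det_fin_zero]
  | succ d ih =>
    intro k
    set A : MvPolynomial (Fin (d + 1)) ℚ →+* FF (d + 1) := algebraMap (MvPolynomial (Fin (d + 1)) ℚ) (FF (d + 1)) with hA
    have hiter : iterProd (d + 1) k =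
        shuffleMul (iterProd d fun i => k i.castSucc) (psiF (k (Fin.last d))) := rfl
    have hdetK : (Matrix.det (Matrix.of fun i j : Fin (d + 1) =>
          (X j : MvPolynomial (Fin (d + 1)) ℚ) ^ (k i))) =
        ∑ p : Fin (d + 1), (-1) ^ (d + (p : ℕ)) * (X p) ^ (k (Fin.last d)) *
          Matrix.det (Matrix.of fun i j : Fin d =>
            (X (p.succAbove j) : MvPolynomial (Fin (d + 1)) ℚ) ^ (k i.castSucc)) := by
      rw [Matrix.det_succ_row _ (Fin.last d)]
      refine Finset.sum_congr rfl fun p _ => ?_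
      have hsub : (Matrix.of fun i j : Fin (d + 1) =>
            (X j : MvPolynomial (Fin (d + 1)) ℚ) ^ (k i)).submatrix
            (Fin.last d).succAbove p.succAbove =
          Matrix.of fun i j : Fin d =>
            (X (p.succAbove j) : MvPolynomial (Fin (d + 1)) ℚ) ^ (k i.castSucc) := by
        ext i j
        simp [Fin.succAbove_last]
      rw [hsub]
      simp
    rw [hiter, shuffleMul_psi, Finset.sum_mul, hdetK, map_sum]
    refine Finset.sum_congr rfl fun p _ => ?_
    -- per-p computation
    have hQ0 : A (∏ μ : Fin d, (X p - X (p.succAbove μ))) ≠ 0 := by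
      have h1 : (∏ μ : Fin d, (X p - X (p.succAbove μ)) : MvPolynomial (Fin (d + 1)) ℚ) ≠ 0 := by
        rw [Finset.prod_ne_zero_iff]
        intro μ _
        refine sub_ne_zero_of_ne fun h => ?_
        exact (Fin.succAbove_ne p μ).symm (X_injective h)
      intro h0
      exact h1 (IsFractionRing.injective (MvPolynomial (Fin (d + 1)) ℚ) (FF (d + 1))
        (by rw [h0, map_zero]))
    have hIH := congrArg (embF p.succAbove (Fin.strictMono_succAbove p).injective)
      (ih fun i => k i.castSucc)
    rw [map_mul, embF_algebraMap, embF_algebraMap, rename_detX, rename_detX] at hIH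
    have hVfac : (Matrix.det (Matrix.of fun i j : Fin (d + 1) =>
          (X j : MvPolynomial (Fin (d + 1)) ℚ) ^ (i : ℕ))) =
        (-1) ^ (d - (p : ℕ)) * (∏ μ : Fin d, (X p - X (p.succAbove μ))) *
          Matrix.det (Matrix.of fun i j : Fin d =>
            (X (p.succAbove j) : MvPolynomial (Fin (d + 1)) ℚ) ^ (i : ℕ)) := by
      rw [det_pow_eq]
      rw [show (Matrix.det (Matrix.of fun i j : Fin d =>
            (X (p.succAbove j) : MvPolynomial (Fin (d + 1)) ℚ) ^ (i : ℕ))) =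
          ∏ i : Fin d, ∏ j ∈ Finset.Ioi i,
            ((X (p.succAbove j) : MvPolynomial (Fin (d + 1)) ℚ) - X (p.succAbove i)) from
        det_pow_eq d (fun j => X (p.succAbove j))]
      exact vandermonde_factor d p X
    have hsign : ((-1 : FF (d + 1)) ^ (d - (p : ℕ))) = (-1) ^ (d + (p : ℕ)) := by
      have h : d + (p : ℕ) = (d - (p : ℕ)) + 2 * (p : ℕ) := by
        have := p.isLt; omega
      rw [h, pow_add, pow_mul, neg_one_sq, one_pow, mul_one]
    calc embF p.succAbove (Fin.strictMono_succAbove p).injective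
          (iterProd d fun i => k i.castSucc) * A ((X p) ^ (k (Fin.last d))) *
          (A (∏ μ : Fin d, (X p - X (p.succAbove μ))))⁻¹ *
          A (Matrix.det (Matrix.of fun i j : Fin (d + 1) =>
            (X j : MvPolynomial (Fin (d + 1)) ℚ) ^ (i : ℕ)))
        = (-1) ^ (d - (p : ℕ)) * A ((X p) ^ (k (Fin.last d))) *
            (embF p.succAbove (Fin.strictMono_succAbove p).injective
              (iterProd d fun i => k i.castSucc) *
              A (Matrix.det (Matrix.of fun i j : Fin d =>
                (X (p.succAbove j) : MvPolynomial (Fin (d + 1)) ℚ) ^ (i : ℕ)))) *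
            ((A (∏ μ : Fin d, (X p - X (p.succAbove μ))))⁻¹ *
              A (∏ μ : Fin d, (X p - X (p.succAbove μ)))) := by
          rw [hVfac]
          simp only [map_mul, map_pow, map_neg, map_one]
          ring
      _ = (-1) ^ (d + (p : ℕ)) * A ((X p) ^ (k (Fin.last d))) *
            A (Matrix.det (Matrix.of fun i j : Fin d =>
              (X (p.succAbove j) : MvPolynomial (Fin (d + 1)) ℚ) ^ (k i.castSucc))) := by
          rw [inv_mul_cancel₀ hQ0, mul_one, hIH, hsign]
      _ = A ((-1) ^ (d + (p : ℕ)) * (X p) ^ (k (Fin.last d)) *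
            Matrix.det (Matrix.of fun i j : Fin d =>
              (X (p.succAbove j) : MvPolynomial (Fin (d + 1)) ℚ) ^ (k i.castSucc))) := by
          simp only [map_mul, map_pow, map_neg, map_one]

/-- for `0 ≤ k_1 < k_2 < … < k_d` one has
`ψ_{k_1} * ⋯ * ψ_{k_d} = s_λ(x_1,…,x_d)`, the Schur polynomial of the
partition `λ = (k_d − d + 1, …, k_2 − 1, k_1)`, i.e. the quotient of the
determinants `det(x_j^{k_i}) / det(x_j^{i−1})` (bialternant formula). -/
theorem iterProd_eq_schur (d : ℕ) (k : Fin d → ℕ) (hk : StrictMono k) :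
    iterProd d k *
        algebraMap (MvPolynomial (Fin d) ℚ) (FF d)
          (Matrix.det (Matrix.of fun i j : Fin d =>
            (X j : MvPolynomial (Fin d) ℚ) ^ (i : ℕ))) =
      algebraMap (MvPolynomial (Fin d) ℚ) (FF d)
        (Matrix.det (Matrix.of fun i j : Fin d =>
          (X j : MvPolynomial (Fin d) ℚ) ^ (k i))) :=
  key d k
end

section
/- For the quiver Ã₁ with stability θ = (1,−1): a representation (A,B) with A ∈ M_{m×m}(C), B ∈ M_{m×m}(C) of dimension vector m⇄m is θ-semi-stable if and only if A is invertible. -/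
open Module

/-- For the quiver `Ã₁` with stability `θ = (1,−1)`, a
representation `(A,B)` of dimension vector `m⇄m` is `θ`-semi-stable iff `A` is
invertible.  Semi-stability: every nonzero subrepresentation `(U,V)` (subspaces
with `AU ⊆ V`, `BV ⊆ U`) has slope `(dim U − dim V)/(dim U + dim V)` at most the
slope `(m−m)/(m+m) = 0` of `(A,B)`. -/
theorem A1_semistable_iff_invertible (m : ℕ) (A B : Matrix (Fin m) (Fin m) ℂ) :
    (∀ U V : Submodule ℂ (Fin m → ℂ),
        U.map A.mulVecLin ≤ V → V.map B.mulVecLin ≤ U → (U ≠ ⊥ ∨ V ≠ ⊥) →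
        ((finrank ℂ U : ℚ) - (finrank ℂ V : ℚ)) /
            ((finrank ℂ U : ℚ) + (finrank ℂ V : ℚ)) ≤ 0) ↔ IsUnit A := by
  constructor
  · intro h
    rw [Matrix.isUnit_iff_isUnit_det, isUnit_iff_ne_zero]
    intro hdet
    obtain ⟨v, hv0, hv⟩ := (Matrix.exists_mulVec_eq_zero_iff).2 hdet
    set U : Submodule ℂ (Fin m → ℂ) := LinearMap.ker A.mulVecLin with hU
    have hUne : U ≠ ⊥ := by
      intro hb
      apply hv0
      have : v ∈ U := by simpa [hU, Matrix.mulVecLin] using hv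
      simpa [hb] using this
    have h1 : U.map A.mulVecLin ≤ (⊥ : Submodule ℂ (Fin m → ℂ)) := by
      rintro x ⟨y, hy, rfl⟩
      simpa [hU] using hy
    have h2 : (⊥ : Submodule ℂ (Fin m → ℂ)).map B.mulVecLin ≤ U := by
      simp
    have := h U ⊥ h1 h2 (Or.inl hUne)
    rw [finrank_bot] at this
    have hpos : 0 < finrank ℂ U := by
      rcases Nat.eq_zero_or_pos (finrank ℂ U) with h0 | h0
      · exact absurd (Submodule.finrank_eq_zero.1 h0) hUne
      · exact h0
    have hq : (0 : ℚ) < (finrank ℂ U : ℚ) := by exact_mod_cast hpos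
    rw [Nat.cast_zero, sub_zero, add_zero, div_self (ne_of_gt hq)] at this
    linarith
  · intro hA U V hAU hBV _
    have hinj : Function.Injective A.mulVecLin := by
      exact fun x y hxy => Matrix.mulVec_injective_iff_isUnit.2 hA (by simpa using hxy)
    have hle : finrank ℂ U ≤ finrank ℂ V := by
      have e := (U.equivMapOfInjective A.mulVecLin hinj).finrank_eq
      calc finrank ℂ U = finrank ℂ (U.map A.mulVecLin) := e
        _ ≤ finrank ℂ V := Submodule.finrank_mono hAU
    have hnum : (finrank ℂ U : ℚ) - (finrank ℂ V : ℚ) ≤ 0 := by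
      have : (finrank ℂ U : ℚ) ≤ (finrank ℂ V : ℚ) := by exact_mod_cast hle
      linarith
    have hden : (0 : ℚ) ≤ (finrank ℂ U : ℚ) + (finrank ℂ V : ℚ) := by positivity
    exact div_nonpos_of_nonpos_of_nonneg hnum hden
end

section
/- In a framed representation setting: let (M,f) be θ̂-stable of dimension d̂ (d of slope μ), decomposed by a subrepresentation M' ⊆ M of slope μ with quotient M'' = M/M'' and induced framing f'' on M''. Then for every proper subrepresentation U'' of M'' containing the image of f'', one has μ(U'') < μ, i.e., (M'', f'') is framed stable. -/
open Module

/-- Slope `μ_θ(c) = θ(c)/Σ_i c_i`. -/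
noncomputable def slopeDim {V : Type} [Fintype V] (θ : V → ℤ) (c : V → ℕ) : ℚ :=
  (∑ i, (θ i : ℚ) * c i) / (∑ i, (c i : ℚ))

/-- `θ`-semi-stability of a nonzero representation `M` of dimension vector `d`. -/
def IsSemistable {V A : Type} [Fintype V] (s t : A → V) (θ : V → ℤ) (d : V → ℕ)
    (M : ∀ a : A, (Fin (d (s a)) → ℂ) →ₗ[ℂ] (Fin (d (t a)) → ℂ)) : Prop :=
  d ≠ 0 ∧ ∀ U : ∀ i, Submodule ℂ (Fin (d i) → ℂ), IsSubrep s t M U →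
    U ≠ (fun _ => ⊥) → slopeDim θ (fun i => finrank ℂ (U i)) ≤ slopeDim θ d

/-- Framed stability (Engel–Reineke characterisation): `(M,f)` is `θ̂`-stable
iff `M` is `θ`-semi-stable and every nonzero proper subrepresentation of `M`
containing the image of the framing `f` has slope strictly less than `μ(M)`. -/
def IsFramedStable {V A : Type} [Fintype V] (s t : A → V) (θ : V → ℤ)
    (d n : V → ℕ)
    (M : ∀ a : A, (Fin (d (s a)) → ℂ) →ₗ[ℂ] (Fin (d (t a)) → ℂ))
    (f : ∀ i, (Fin (n i) → ℂ) →ₗ[ℂ] (Fin (d i) → ℂ)) : Prop :=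
  IsSemistable s t θ d M ∧
    ∀ U : ∀ i, Submodule ℂ (Fin (d i) → ℂ), IsSubrep s t M U →
      (∀ i, LinearMap.range (f i) ≤ U i) → U ≠ (fun _ => ⊥) → (∃ i, U i ≠ ⊤) →
      slopeDim θ (fun i => finrank ℂ (U i)) < slopeDim θ d

/-! Pull a subrepresentation `U''` of `M''` back to `U = π⁻¹ U''` in `M`: it is a
subrepresentation containing `im f`, nonzero resp. proper when `U''` is, and its dimension
vector is `d' + dim U''`. As `μ(d') = μ`, the slope of `d' + dim U''` lies on the same side of
`μ` as that of `dim U''`, so the (semi-)stability inequalities for `M` descend to `M''`. -/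

theorem finrank_comap_of_surjective {K E F : Type*} [DivisionRing K] [AddCommGroup E]
    [Module K E] [AddCommGroup F] [Module K F] [FiniteDimensional K E] {π : E →ₗ[K] F}
    (hπ : Function.Surjective π) (W : Submodule K F) :
    finrank K (W.comap π) = finrank K (LinearMap.ker π) + finrank K W := by
  have h := (π.domRestrict (W.comap π)).finrank_range_add_finrank_ker
  rw [LinearMap.range_domRestrict, Submodule.map_comap_eq_of_surjective hπ,
    LinearMap.ker_domRestrict,
    (Submodule.comapSubtypeEquivOfLe (LinearMap.ker_le_comap π)).finrank_eq] at h
  omega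

section Slope

variable {V : Type} [Fintype V] (θ : V → ℤ)

theorem slopeDim_mul_sum (c : V → ℕ) :
    slopeDim θ c * ∑ i, (c i : ℚ) = ∑ i, (θ i : ℚ) * c i := by
  by_cases hc : ∑ i, (c i : ℚ) = 0
  · have hc0 : ∀ i, (c i : ℚ) = 0 := fun i =>
      (Finset.sum_eq_zero_iff_of_nonneg fun _ _ => by positivity).1 hc i (Finset.mem_univ i)
    simp [hc0]
  · exact div_mul_cancel₀ _ hc

theorem sum_natCast_pos_of_ne_zero {c : V → ℕ} (hc : c ≠ 0) : 0 < ∑ i, (c i : ℚ) := by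
  obtain ⟨i, hi⟩ := Function.ne_iff.1 hc
  exact Finset.sum_pos' (fun _ _ => by positivity)
    ⟨i, Finset.mem_univ i, by exact_mod_cast Nat.pos_of_ne_zero hi⟩

variable {θ}

theorem slopeDim_add_sub_mul {a : V → ℕ} {μ : ℚ} (ha : slopeDim θ a = μ) (c : V → ℕ) :
    (slopeDim θ (a + c) - μ) * ∑ i, ((a + c) i : ℚ) = (slopeDim θ c - μ) * ∑ i, (c i : ℚ) := by
  have hac := slopeDim_mul_sum θ (a + c)
  have ha' := slopeDim_mul_sum θ a
  have hc := slopeDim_mul_sum θ c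
  simp only [Pi.add_apply, Nat.cast_add, mul_add, Finset.sum_add_distrib] at hac ⊢
  rw [ha] at ha'
  linear_combination hac - ha' - hc

theorem slopeDim_le_of_slopeDim_add_le {a c : V → ℕ} {μ : ℚ} (hc : c ≠ 0)
    (ha : slopeDim θ a = μ) (h : slopeDim θ (a + c) ≤ μ) : slopeDim θ c ≤ μ := by
  have hS := sum_natCast_pos_of_ne_zero hc
  have hS' : 0 < ∑ i, ((a + c) i : ℚ) := hS.trans_le (Finset.sum_le_sum fun _ _ => by simp)
  nlinarith [slopeDim_add_sub_mul ha c]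

theorem slopeDim_lt_of_slopeDim_add_lt {a c : V → ℕ} {μ : ℚ} (hc : c ≠ 0)
    (ha : slopeDim θ a = μ) (h : slopeDim θ (a + c) < μ) : slopeDim θ c < μ := by
  have hS := sum_natCast_pos_of_ne_zero hc
  have hS' : 0 < ∑ i, ((a + c) i : ℚ) := hS.trans_le (Finset.sum_le_sum fun _ _ => by simp)
  nlinarith [slopeDim_add_sub_mul ha c]

end Slope

theorem IsSubrep.comap {V A : Type} {s t : A → V} {d e : V → ℕ}
    {M : ∀ a : A, (Fin (d (s a)) → ℂ) →ₗ[ℂ] (Fin (d (t a)) → ℂ)}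
    {N : ∀ a : A, (Fin (e (s a)) → ℂ) →ₗ[ℂ] (Fin (e (t a)) → ℂ)}
    {π : ∀ i, (Fin (d i) → ℂ) →ₗ[ℂ] (Fin (e i) → ℂ)}
    (hπ : ∀ a, (π (t a)).comp (M a) = (N a).comp (π (s a)))
    {U : ∀ i, Submodule ℂ (Fin (e i) → ℂ)} (hU : IsSubrep s t N U) :
    IsSubrep s t M (fun i => (U i).comap (π i)) := by
  intro a
  rw [← Submodule.map_le_iff_le_comap, ← Submodule.map_comp, hπ a, Submodule.map_comp]
  exact (Submodule.map_mono (Submodule.map_comap_le _ _)).trans (hU a)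

theorem comap_ne_bot_of_surjective {V : Type} {d e : V → ℕ}
    {π : ∀ i, (Fin (d i) → ℂ) →ₗ[ℂ] (Fin (e i) → ℂ)} (hπ : ∀ i, Function.Surjective (π i))
    {U : ∀ i, Submodule ℂ (Fin (e i) → ℂ)} (hU : U ≠ fun _ => ⊥) :
    (fun i => (U i).comap (π i)) ≠ fun _ => ⊥ := by
  refine fun h => hU (funext fun i => ?_)
  rw [← Submodule.map_comap_eq_of_surjective (hπ i) (U i), congrFun h i, Submodule.map_bot]

theorem finrank_ne_zero_of_ne_bot {V : Type} {d : V → ℕ}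
    {U : ∀ i, Submodule ℂ (Fin (d i) → ℂ)} (hU : U ≠ fun _ => ⊥) : (fun i => finrank ℂ (U i)) ≠ 0 :=
  fun h => hU (funext fun i => Submodule.finrank_eq_zero.1 (congrFun h i))

theorem framed_quotient_stable_general {V A : Type} [Fintype V] (s t : A → V)
    (θ : V → ℤ) (d' d d'' n : V → ℕ)
    (M : ∀ a : A, (Fin (d (s a)) → ℂ) →ₗ[ℂ] (Fin (d (t a)) → ℂ))
    (M'' : ∀ a : A, (Fin (d'' (s a)) → ℂ) →ₗ[ℂ] (Fin (d'' (t a)) → ℂ))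
    (ι : ∀ i, (Fin (d' i) → ℂ) →ₗ[ℂ] (Fin (d i) → ℂ))
    (π : ∀ i, (Fin (d i) → ℂ) →ₗ[ℂ] (Fin (d'' i) → ℂ))
    (hι : ∀ i, Function.Injective (ι i))
    (hπ : ∀ i, Function.Surjective (π i))
    (hexact : ∀ i, LinearMap.range (ι i) = LinearMap.ker (π i))
    (hcommπ : ∀ a, (π (t a)).comp (M a) = (M'' a).comp (π (s a)))
    (hd'' : d'' ≠ 0)
    (h1 : slopeDim θ d' = slopeDim θ d) (h2 : slopeDim θ d = slopeDim θ d'')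
    (f : ∀ i, (Fin (n i) → ℂ) →ₗ[ℂ] (Fin (d i) → ℂ))
    (hstable : IsFramedStable s t θ d n M f) :
    IsFramedStable s t θ d'' n M'' (fun i => (π i).comp (f i)) := by
  obtain ⟨⟨-, hss⟩, hfr⟩ := hstable
  let pullback (U : ∀ i, Submodule ℂ (Fin (d'' i) → ℂ)) i := (U i).comap (π i)
  have hdim U : (fun i => finrank ℂ (pullback U i)) = d' + fun i => finrank ℂ (U i) := by
    funext i
    rw [Pi.add_apply, finrank_comap_of_surjective (hπ i), ← hexact i,
      LinearMap.finrank_range_of_inj (hι i), finrank_fin_fun]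
  refine ⟨⟨hd'', fun U hU hne => ?_⟩, fun U hU hf hne htop => ?_⟩
  · rw [← h2]
    refine slopeDim_le_of_slopeDim_add_le (finrank_ne_zero_of_ne_bot hne) h1 ?_
    rw [← hdim]
    exact hss _ (hU.comap hcommπ) (comap_ne_bot_of_surjective hπ hne)
  · rw [← h2]
    refine slopeDim_lt_of_slopeDim_add_lt (finrank_ne_zero_of_ne_bot hne) h1 ?_
    rw [← hdim]
    refine hfr _ (hU.comap hcommπ) (fun i => ?_) (comap_ne_bot_of_surjective hπ hne) ?_
    · rw [← Submodule.map_le_iff_le_comap, ← LinearMap.range_comp]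
      exact hf i
    · obtain ⟨i, hi⟩ := htop
      refine ⟨i, fun h => hi (Submodule.comap_injective_of_surjective (hπ i) ?_)⟩
      rw [Submodule.comap_top]
      exact h

/-- if `(M,f)` is framed stable of slope `μ` and
`0 → M' → M → M'' → 0` is a short exact sequence with `μ(M') = μ(M'') = μ(M)`,
then the quotient with the induced framing `f'' = π ∘ f` is framed stable: `M''`
is semi-stable and every nonzero proper subrepresentation `U''` of `M''`
containing the image of `f''` satisfies `μ(U'') < μ`. -/
theorem framed_quotient_stable {V A : Type} [Fintype V] (s t : A → V)
    (θ : V → ℤ) (d' d d'' n : V → ℕ)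
    (M' : ∀ a : A, (Fin (d' (s a)) → ℂ) →ₗ[ℂ] (Fin (d' (t a)) → ℂ))
    (M : ∀ a : A, (Fin (d (s a)) → ℂ) →ₗ[ℂ] (Fin (d (t a)) → ℂ))
    (M'' : ∀ a : A, (Fin (d'' (s a)) → ℂ) →ₗ[ℂ] (Fin (d'' (t a)) → ℂ))
    (ι : ∀ i, (Fin (d' i) → ℂ) →ₗ[ℂ] (Fin (d i) → ℂ))
    (π : ∀ i, (Fin (d i) → ℂ) →ₗ[ℂ] (Fin (d'' i) → ℂ))
    (hι : ∀ i, Function.Injective (ι i))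
    (hπ : ∀ i, Function.Surjective (π i))
    (hexact : ∀ i, LinearMap.range (ι i) = LinearMap.ker (π i))
    (hcommι : ∀ a, (ι (t a)).comp (M' a) = (M a).comp (ι (s a)))
    (hcommπ : ∀ a, (π (t a)).comp (M a) = (M'' a).comp (π (s a)))
    (hd'' : d'' ≠ 0)
    (h1 : slopeDim θ d' = slopeDim θ d) (h2 : slopeDim θ d = slopeDim θ d'')
    (f : ∀ i, (Fin (n i) → ℂ) →ₗ[ℂ] (Fin (d i) → ℂ))
    (hstable : IsFramedStable s t θ d n M f) :
    IsFramedStable s t θ d'' n M'' (fun i => (π i).comp (f i)) :=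
  framed_quotient_stable_general s t θ d' d d'' n M M'' ι π hι hπ hexact hcommπ hd'' h1 h2 f hstable
end
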